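/- arXiv:1412.4494 — 5 statements merged into one kernel-verified Lean document; each statement's English description precedes it below -/
import Mathlib

section
/- Let d ≥ 1 and ℓ ≥ 1. Let P be the presented group on generators s_0, s_1, …, s_{d-1} with relations: s_0^ℓ = 1; s_i² = 1 for i = 1, …, d−1; s_0 s_1 s_0 s_1 = s_1 s_0 s_1 s_0 (when d ≥ 2); s_i s_{i+1} s_i = s_{i+1} s_i s_{i+1} for i = 1, …, d−2; and s_i s_j = s_j s_i whenever |i − j| > 1, 0 ≤ i, j ≤ d−1. Then there is a group isomorphism from P to W(ℓ,d) sending s_0 to (Pi.single 0 (Multiplicative.ofAdd (1 : ZMod ℓ)), 1) and, for 1 ≤ i ≤ d−1, sending s_i to (1, Equiv.swap ⟨i−1⟩ ⟨i⟩) (the transposition of the (i−1)-st and i-th elements of Fin d). (The presentation (3) of the generalized symmetric group S(ℓ,d).) -/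
/-- The action of permutations of `Fin d` on tuples `Fin d → Multiplicative (ZMod ℓ)`,
given by `(σ • a) j = a (σ⁻¹ j)`. -/
def permMulAut (ℓ d : ℕ) :
    Equiv.Perm (Fin d) →* MulAut (Fin d → Multiplicative (ZMod ℓ)) where
  toFun σ :=
    { toFun := fun a j => a (σ⁻¹ j)
      invFun := fun a j => a (σ j)
      left_inv := fun a => by funext j; simp
      right_inv := fun a => by funext j; simp
      map_mul' := fun a b => rfl }
  map_one' := by ext a j; simp
  map_mul' := fun σ τ => by ext a j; simp

/-- The generalized symmetric group `S(ℓ,d) = C_ℓ ≀ S_d`, modeled as the semidirect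
product `(Fin d → Multiplicative (ZMod ℓ)) ⋊ Equiv.Perm (Fin d)`. -/
def W (ℓ d : ℕ) : Type :=
  SemidirectProduct (Fin d → Multiplicative (ZMod ℓ)) (Equiv.Perm (Fin d)) (permMulAut ℓ d)

instance (ℓ d : ℕ) : Group (W ℓ d) :=
  inferInstanceAs (Group (SemidirectProduct _ _ (permMulAut ℓ d)))

/-- The relations of the presentation (3) of `S(ℓ,d)`, on generators `s_0, …, s_{d-1}`
indexed by `Fin d`. -/
def wreathRels (ℓ d : ℕ) : Set (FreeGroup (Fin d)) :=
  {r | (∃ i : Fin d, i.val = 0 ∧ r = (FreeGroup.of i) ^ ℓ) ∨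
       (∃ i : Fin d, 1 ≤ i.val ∧ r = (FreeGroup.of i) ^ 2) ∨
       (∃ i j : Fin d, i.val = 0 ∧ j.val = 1 ∧
          r = FreeGroup.of i * FreeGroup.of j * FreeGroup.of i * FreeGroup.of j *
              (FreeGroup.of j * FreeGroup.of i * FreeGroup.of j * FreeGroup.of i)⁻¹) ∨
       (∃ i j : Fin d, 1 ≤ i.val ∧ j.val = i.val + 1 ∧
          r = FreeGroup.of i * FreeGroup.of j * FreeGroup.of i *
              (FreeGroup.of j * FreeGroup.of i * FreeGroup.of j)⁻¹) ∨
       (∃ i j : Fin d, (i.val + 1 < j.val ∨ j.val + 1 < i.val) ∧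
          r = FreeGroup.of i * FreeGroup.of j * (FreeGroup.of j * FreeGroup.of i)⁻¹)}

namespace WreathAux

variable (ℓ D : ℕ)

abbrev P := PresentedGroup (wreathRels ℓ D)

/-- ℕ-indexed generators, junk value 1 out of range. -/
noncomputable def S (n : ℕ) : P ℓ D :=
  if h : n < D then PresentedGroup.of ⟨n, h⟩ else 1

variable {ℓ D}

lemma mk_rel {r : FreeGroup (Fin D)} (hr : r ∈ wreathRels ℓ D) :
    PresentedGroup.mk (wreathRels ℓ D) r = 1 := by
  exact (QuotientGroup.eq_one_iff r).2 (Subgroup.subset_normalClosure hr)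

lemma S_eq_of {n : ℕ} (h : n < D) : S ℓ D n = PresentedGroup.of ⟨n, h⟩ := dif_pos h

lemma of_eq_S (i : Fin D) : PresentedGroup.of i = S ℓ D i.val := by
  rw [S_eq_of i.isLt]

lemma hS0 (h : 0 < D) : S ℓ D 0 ^ ℓ = 1 := by
  rw [S_eq_of h]
  have := mk_rel (ℓ := ℓ) (Or.inl ⟨⟨0, h⟩, rfl, rfl⟩)
  rwa [map_pow] at this

lemma hS1 {i : ℕ} (h1 : 1 ≤ i) (h2 : i < D) : S ℓ D i * S ℓ D i = 1 := by
  rw [S_eq_of h2]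
  have := mk_rel (ℓ := ℓ) (Or.inr (Or.inl ⟨⟨i, h2⟩, h1, rfl⟩))
  rwa [map_pow, pow_two] at this

lemma hS1inv {i : ℕ} (h1 : 1 ≤ i) (h2 : i < D) : (S ℓ D i)⁻¹ = S ℓ D i :=
  inv_eq_of_mul_eq_one_right (hS1 h1 h2)

lemma hS2 (h : 2 ≤ D) :
    S ℓ D 0 * S ℓ D 1 * S ℓ D 0 * S ℓ D 1 = S ℓ D 1 * S ℓ D 0 * S ℓ D 1 * S ℓ D 0 := by
  have h0 : 0 < D := by omega
  have h1 : 1 < D := by omega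
  rw [S_eq_of h0, S_eq_of h1]
  have := mk_rel (ℓ := ℓ) (Or.inr (Or.inr (Or.inl ⟨⟨0, h0⟩, ⟨1, h1⟩, rfl, rfl, rfl⟩)))
  simp only [map_mul, map_inv] at this
  rw [mul_inv_eq_one] at this
  exact this

lemma hS3 {i : ℕ} (h1 : 1 ≤ i) (h2 : i + 1 < D) :
    S ℓ D i * S ℓ D (i+1) * S ℓ D i = S ℓ D (i+1) * S ℓ D i * S ℓ D (i+1) := by
  have hi : i < D := by omega
  rw [S_eq_of hi, S_eq_of h2]
  have := mk_rel (ℓ := ℓ)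
    (Or.inr (Or.inr (Or.inr (Or.inl ⟨⟨i, hi⟩, ⟨i+1, h2⟩, h1, rfl, rfl⟩))))
  simp only [map_mul, map_inv] at this
  rw [mul_inv_eq_one] at this
  exact this

lemma hS4 {i j : ℕ} (h1 : i + 1 < j) (h2 : j < D) :
    Commute (S ℓ D i) (S ℓ D j) := by
  have hi : i < D := by omega
  rw [Commute, SemiconjBy, S_eq_of hi, S_eq_of h2]
  have := mk_rel (ℓ := ℓ)
    (Or.inr (Or.inr (Or.inr (Or.inr ⟨⟨i, hi⟩, ⟨j, h2⟩, Or.inl h1, rfl⟩))))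
  simp only [map_mul, map_inv] at this
  rw [mul_inv_eq_one] at this
  exact this


lemma braid_comm_aux {G : Type*} [Group G] {a b c : G}
    (hbr : a * b * a = b * a * b) (hbc : b * c = c * b) :
    a * (b * (a * c * a) * b) = b * (a * c * a) * b * a := by
  calc a * (b*(a*c*a)*b) = (a*b*a)*(c*(a*b)) := by group
  _ = (b*a*b)*(c*(a*b)) := by rw [hbr]
  _ = (b*a)*((b*c)*(a*b)) := by group
  _ = (b*a)*((c*b)*(a*b)) := by rw [hbc]
  _ = ((b*a)*c)*(b*a*b) := by group
  _ = ((b*a)*c)*(a*b*a) := by rw [hbr]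
  _ = (b*(a*c*a)*b)*a := by group

variable (ℓ D) in
noncomputable def T : ℕ → P ℓ D
  | 0 => S ℓ D 0
  | (k+1) => S ℓ D (k+1) * T k * S ℓ D (k+1)

lemma T_pow {k : ℕ} (hk : k < D) : T ℓ D k ^ ℓ = 1 := by
  induction k with
  | zero => rw [T]; exact hS0 (by omega)
  | succ k ih =>
    rw [T]
    nth_rewrite 2 [← hS1inv (by omega) hk]
    rw [conj_pow, ih (by omega), mul_one, hS1inv (by omega) hk, hS1 (by omega) hk]

lemma comm_S_T_far {i k : ℕ} (h : k + 2 ≤ i) (hi : i < D) :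
    Commute (S ℓ D i) (T ℓ D k) := by
  induction k with
  | zero => exact (hS4 (by omega) hi).symm
  | succ k ih =>
    rw [T]
    exact (((hS4 (i := k+1) (j := i) (by omega) hi).symm.mul_right
      (ih (by omega))).mul_right (hS4 (i := k+1) (j := i) (by omega) hi).symm)

lemma comm_S0_T : ∀ {k : ℕ}, 1 ≤ k → k < D → Commute (S ℓ D 0) (T ℓ D k)
  | 1, _, hk => by
      have h2 : 2 ≤ D := by omega
      have := hS2 (ℓ := ℓ) h2
      rw [T, T, Commute, SemiconjBy]
      calc S ℓ D 0 * (S ℓ D (0+1) * S ℓ D 0 * S ℓ D (0+1))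
          = S ℓ D 0 * S ℓ D 1 * S ℓ D 0 * S ℓ D 1 := by group
      _ = S ℓ D 1 * S ℓ D 0 * S ℓ D 1 * S ℓ D 0 := this
      _ = S ℓ D (0+1) * S ℓ D 0 * S ℓ D (0+1) * S ℓ D 0 := by group
  | (k+2), _, hk => by
      rw [T]
      exact ((hS4 (i := 0) (j := k+2) (by omega) hk).mul_right
        (comm_S0_T (by omega) (by omega))).mul_right (hS4 (i := 0) (j := k+2) (by omega) hk)

lemma comm_S_T_lt : ∀ {i k : ℕ}, 1 ≤ i → i < k → k < D → Commute (S ℓ D i) (T ℓ D k) := by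
  intro i k
  induction k with
  | zero => omega
  | succ k ih =>
    intro h1 h2 hk
    rcases Nat.lt_or_ge i k with hik | hik
    · -- i < k, so i+1 < k+1 : far-from-top case of T (k+1)
      rw [T]
      exact ((hS4 (i := i) (j := k+1) (by omega) hk).mul_right
        (ih h1 hik (by omega))).mul_right (hS4 (i := i) (j := k+1) (by omega) hk)
    · -- i = k
      have hik' : i = k := by omega
      subst hik'
      obtain ⟨n, rfl⟩ : ∃ n, i = n + 1 := ⟨i - 1, by omega⟩
      rw [T, T, Commute, SemiconjBy]
      exact braid_comm_aux (hS3 (by omega) hk)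
        ((comm_S_T_far (by omega) hk).eq)

lemma comm_S_T {i k : ℕ} (h : i < k) (hk : k < D) : Commute (S ℓ D i) (T ℓ D k) := by
  rcases Nat.eq_zero_or_pos i with rfl | h1
  · exact comm_S0_T (by omega) hk
  · exact comm_S_T_lt h1 h hk


variable (ℓ D) in
/-- `V dt j = S dt * S (dt-1) * ⋯ * S (j+1)` (empty product if `j ≥ dt`). -/
noncomputable def V (dt j : ℕ) : P ℓ D :=
  ((List.range (dt - j)).map (fun i => S ℓ D (dt - i))).prod

lemma V_top (dt : ℕ) : V ℓ D dt dt = 1 := by simp [V]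

lemma V_of_le {dt j : ℕ} (h : dt ≤ j) : V ℓ D dt j = 1 := by
  rw [V, Nat.sub_eq_zero_of_le h]; simp

lemma V_step {dt j : ℕ} (h : j < dt) : V ℓ D dt j = V ℓ D dt (j+1) * S ℓ D (j+1) := by
  have hn : dt - j = (dt - (j+1)) + 1 := by omega
  rw [V, hn, List.range_succ, List.map_append, List.prod_append, V]
  simp only [List.map_cons, List.map_nil, List.prod_cons, List.prod_nil, mul_one]
  rw [show dt - (dt - (j+1)) = j + 1 by omega]

lemma comm_S_V {i dt : ℕ} (hdt : dt < D) : ∀ {n j : ℕ}, dt - j = n → i < j →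
    Commute (S ℓ D i) (V ℓ D dt j)
  | 0, j, hn, _ => by rw [V_of_le (by omega)]; exact Commute.one_right _
  | (n+1), j, hn, hij => by
      rw [V_step (by omega)]
      exact (comm_S_V hdt (n := n) (by omega) (by omega)).mul_right
        (hS4 (i := i) (j := j+1) (by omega) (by omega))

lemma V_braid {i dt : ℕ} (hdt : dt < D) : ∀ {n j : ℕ}, i - 2 - j = n →
    j + 2 ≤ i → i ≤ dt → V ℓ D dt j * S ℓ D i = S ℓ D (i-1) * V ℓ D dt j
  | 0, j, hn, hji, hidt => by
      have hj : j = i - 2 := by omega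
      subst hj
      obtain ⟨m, rfl⟩ : ∃ m, i = m + 2 := ⟨i - 2, by omega⟩
      simp only [show m + 2 - 2 = m from rfl]
      rw [show m + 2 - 1 = m + 1 by omega]
      rw [V_step (by omega : m < dt), V_step (by omega : m + 1 < dt)]
      have h1 : m + 1 = (m + 2) - 1 := by omega
      have braid := hS3 (ℓ := ℓ) (i := m+1) (by omega) (by omega : (m+1)+1 < D)
      rw [show m + 1 + 1 = m + 2 from rfl] at braid
      have hcomm : V ℓ D dt (m+2) * S ℓ D (m+1) = S ℓ D (m+1) * V ℓ D dt (m+2) :=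
        (comm_S_V (i := m+1) hdt (n := dt - (m+2)) rfl (by omega)).eq.symm
      calc V ℓ D dt (m+2) * S ℓ D (m+2) * S ℓ D (m+1) * S ℓ D (m+2)
          = V ℓ D dt (m+2) * (S ℓ D (m+2) * S ℓ D (m+1) * S ℓ D (m+2)) := by group
        _ = V ℓ D dt (m+2) * (S ℓ D (m+1) * S ℓ D (m+2) * S ℓ D (m+1)) := by rw [← braid]
        _ = (V ℓ D dt (m+2) * S ℓ D (m+1)) * (S ℓ D (m+2) * S ℓ D (m+1)) := by group
        _ = (S ℓ D (m+1) * V ℓ D dt (m+2)) * (S ℓ D (m+2) * S ℓ D (m+1)) := by rw [hcomm]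
        _ = S ℓ D (m+1) * (V ℓ D dt (m+2) * S ℓ D (m+2) * S ℓ D (m+1)) := by group
  | (n+1), j, hn, hji, hidt => by
      rw [V_step (by omega : j < dt)]
      have hcomm : S ℓ D (j+1) * S ℓ D i = S ℓ D i * S ℓ D (j+1) :=
        (hS4 (i := j+1) (j := i) (by omega) (by omega)).eq
      calc V ℓ D dt (j+1) * S ℓ D (j+1) * S ℓ D i
          = V ℓ D dt (j+1) * (S ℓ D (j+1) * S ℓ D i) := by group
        _ = V ℓ D dt (j+1) * (S ℓ D i * S ℓ D (j+1)) := by rw [hcomm]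
        _ = (V ℓ D dt (j+1) * S ℓ D i) * S ℓ D (j+1) := by group
        _ = (S ℓ D (i-1) * V ℓ D dt (j+1)) * S ℓ D (j+1) := by
              rw [V_braid hdt (n := n) (by omega) (by omega) hidt]
        _ = S ℓ D (i-1) * (V ℓ D dt (j+1) * S ℓ D (j+1)) := by group

lemma V_conj_T {dt : ℕ} (hdt : dt < D) : ∀ {n j : ℕ}, dt - j = n → j ≤ dt →
    V ℓ D dt j * T ℓ D j = T ℓ D dt * V ℓ D dt j
  | 0, j, hn, hj => by
      have : j = dt := by omega
      subst this
      rw [V_top, one_mul, mul_one]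
  | (n+1), j, hn, hj => by
      have hjdt : j < dt := by omega
      have hST : S ℓ D (j+1) * T ℓ D j = T ℓ D (j+1) * S ℓ D (j+1) := by
        rw [T, mul_assoc, mul_assoc, hS1 (by omega) (by omega), mul_one]
      rw [V_step hjdt]
      calc V ℓ D dt (j+1) * S ℓ D (j+1) * T ℓ D j
          = V ℓ D dt (j+1) * (S ℓ D (j+1) * T ℓ D j) := by group
        _ = V ℓ D dt (j+1) * (T ℓ D (j+1) * S ℓ D (j+1)) := by rw [hST]
        _ = (V ℓ D dt (j+1) * T ℓ D (j+1)) * S ℓ D (j+1) := by group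
        _ = (T ℓ D dt * V ℓ D dt (j+1)) * S ℓ D (j+1) := by
              rw [V_conj_T hdt (n := n) (by omega) (by omega)]
        _ = T ℓ D dt * (V ℓ D dt (j+1) * S ℓ D (j+1)) := by group


lemma castSucc_rels (r : FreeGroup (Fin D)) (hr : r ∈ wreathRels ℓ D) :
    FreeGroup.map Fin.castSucc r ∈ wreathRels ℓ (D+1) := by
  rcases hr with ⟨i, hi, rfl⟩ | ⟨i, hi, rfl⟩ | ⟨i, j, hi, hj, rfl⟩ | ⟨i, j, hi, hj, rfl⟩ |
    ⟨i, j, hij, rfl⟩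
  · exact Or.inl ⟨i.castSucc, by simpa using hi, by simp⟩
  · exact Or.inr (Or.inl ⟨i.castSucc, by simpa using hi, by simp⟩)
  · refine Or.inr (Or.inr (Or.inl ⟨i.castSucc, j.castSucc, by simpa using hi,
      by simpa using hj, by simp⟩))
  · refine Or.inr (Or.inr (Or.inr (Or.inl ⟨i.castSucc, j.castSucc, by simpa using hi,
      by simpa using hj, by simp⟩)))
  · refine Or.inr (Or.inr (Or.inr (Or.inr ⟨i.castSucc, j.castSucc, by simpa using hij,
      by simp⟩)))

variable (ℓ D) in
/-- The canonical homomorphism `P ℓ D →* P ℓ (D+1)` induced by `Fin.castSucc`. -/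
noncomputable def ι : P ℓ D →* P ℓ (D+1) :=
  PresentedGroup.toGroup (f := fun i => PresentedGroup.of (rels := wreathRels ℓ (D+1))
    (Fin.castSucc i)) (by
      intro r hr
      have key : (FreeGroup.lift fun i => PresentedGroup.of (rels := wreathRels ℓ (D+1))
          (Fin.castSucc i)) = (PresentedGroup.mk (wreathRels ℓ (D+1))).comp
          (FreeGroup.map Fin.castSucc) := by
        apply FreeGroup.ext_hom
        intro a
        simp [PresentedGroup.of]
      rw [key]
      exact mk_rel (castSucc_rels r hr))

lemma ι_S {n : ℕ} (h : n < D) : ι ℓ D (S ℓ D n) = S ℓ (D+1) n := by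
  rw [S_eq_of h, S_eq_of (show n < D + 1 by omega), ι, PresentedGroup.toGroup.of]
  congr 1

lemma ι_T {k : ℕ} (h : k < D) : ι ℓ D (T ℓ D k) = T ℓ (D+1) k := by
  induction k with
  | zero => rw [T, T]; exact ι_S (by omega)
  | succ k ih =>
    rw [T, T, map_mul, map_mul, ι_S h, ih (by omega)]


/-- The coset representatives `X j m = T^m * V j` in `P ℓ (D+1)`, and the key
closure property: right multiplication by a generator stays in `⋃ (range ι) * X`. -/
lemma step_mul_S {j m i : ℕ} (hj : j ≤ D) (hi : i ≤ D) :
    ∃ (h' : P ℓ D) (j' m' : ℕ), j' ≤ D ∧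
      (T ℓ (D+1) D ^ m * V ℓ (D+1) D j) * S ℓ (D+1) i
        = ι ℓ D h' * (T ℓ (D+1) D ^ m' * V ℓ (D+1) D j') := by
  have hdt : D < D + 1 := by omega
  rcases Nat.eq_zero_or_pos i with rfl | hi1
  · rcases Nat.eq_zero_or_pos j with rfl | hj1
    · -- i = 0, j = 0
      refine ⟨1, 0, m+1, by omega, ?_⟩
      have h0 : V ℓ (D+1) D 0 * T ℓ (D+1) 0 = T ℓ (D+1) D * V ℓ (D+1) D 0 :=
        V_conj_T hdt (n := D) (by omega) (by omega)
      rw [T] at h0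
      rw [map_one, one_mul, mul_assoc, h0, pow_succ]
      group
    · -- i = 0, j ≥ 1
      have c1 : Commute (S ℓ (D+1) 0) (T ℓ (D+1) D ^ m) :=
        (comm_S_T (by omega) (by omega)).pow_right m
      have c2 : Commute (S ℓ (D+1) 0) (V ℓ (D+1) D j) :=
        comm_S_V hdt (n := D - j) rfl (by omega)
      refine ⟨S ℓ D 0, j, m, hj, ?_⟩
      rw [ι_S (by omega), mul_assoc, ← c2.eq, ← mul_assoc, ← c1.eq]
      group
  · rcases Nat.lt_or_ge i j with hij | hij
    · -- 1 ≤ i < j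
      have c1 : Commute (S ℓ (D+1) i) (T ℓ (D+1) D ^ m) :=
        (comm_S_T (by omega) (by omega)).pow_right m
      have c2 : Commute (S ℓ (D+1) i) (V ℓ (D+1) D j) :=
        comm_S_V hdt (n := D - j) rfl (by omega)
      refine ⟨S ℓ D i, j, m, hj, ?_⟩
      rw [ι_S (by omega), mul_assoc, ← c2.eq, ← mul_assoc, ← c1.eq]
      group
    · rcases Nat.eq_or_lt_of_le hij with heq | hij1
      · -- i = j ≥ 1
        have hieq : i = j := by omega
        subst hieq
        refine ⟨1, i - 1, m, by omega, ?_⟩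
        have := V_step (ℓ := ℓ) (D := D+1) (dt := D) (j := i - 1) (by omega)
        rw [show i - 1 + 1 = i by omega] at this
        rw [map_one, one_mul, mul_assoc, ← this]
      · rcases Nat.eq_or_lt_of_le hij1 with hij2 | hij2
        · -- i = j + 1
          have hieq : i = j + 1 := by omega
          subst hieq
          refine ⟨1, j + 1, m, by omega, ?_⟩
          rw [map_one, one_mul, V_step (show j < D by omega), mul_assoc,
            mul_assoc, hS1 (by omega) (by omega), mul_one]
        · -- i ≥ j + 2
          have hbr : V ℓ (D+1) D j * S ℓ (D+1) i = S ℓ (D+1) (i-1) * V ℓ (D+1) D j :=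
            V_braid hdt (n := i - 2 - j) rfl (by omega) hi
          have c1 : Commute (S ℓ (D+1) (i-1)) (T ℓ (D+1) D ^ m) :=
            (comm_S_T (by omega) (by omega)).pow_right m
          refine ⟨S ℓ D (i-1), j, m, hj, ?_⟩
          rw [ι_S (by omega), mul_assoc, hbr, ← mul_assoc, ← c1.eq, mul_assoc]


lemma pow_mod_of_pow_eq_one {G : Type*} [Group G] {g : G} {c : ℕ} (hg : g ^ c = 1) (m : ℕ) :
    g ^ m = g ^ (m % c) := by
  conv_lhs => rw [← Nat.div_add_mod m c, pow_add, pow_mul, hg, one_pow, one_mul]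

variable (ℓ D) in
/-- The covering set of `P ℓ (D+1)`. -/
def SS : Set (P ℓ (D+1)) :=
  {g | ∃ (h' : P ℓ D) (j m : ℕ), j ≤ D ∧
    g = ι ℓ D h' * (T ℓ (D+1) D ^ m * V ℓ (D+1) D j)}

lemma one_mem_SS : (1 : P ℓ (D+1)) ∈ SS ℓ D :=
  ⟨1, D, 0, le_refl _, by rw [map_one, one_mul, pow_zero, one_mul, V_top]⟩

lemma SS_mul_S {g : P ℓ (D+1)} (hg : g ∈ SS ℓ D) {i : ℕ} (hi : i ≤ D) :
    g * S ℓ (D+1) i ∈ SS ℓ D := by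
  obtain ⟨h', j, m, hj, rfl⟩ := hg
  obtain ⟨h'', j', m', hj', heq⟩ := step_mul_S (ℓ := ℓ) (m := m) hj hi
  exact ⟨h' * h'', j', m', hj', by rw [map_mul, mul_assoc, heq, ← mul_assoc]⟩

lemma SS_mul_S_pow {g : P ℓ (D+1)} (hg : g ∈ SS ℓ D) {i : ℕ} (hi : i ≤ D) (k : ℕ) :
    g * S ℓ (D+1) i ^ k ∈ SS ℓ D := by
  induction k with
  | zero => simpa using hg
  | succ k ih => rw [pow_succ, ← mul_assoc]; exact SS_mul_S ih hi

lemma mem_SS (hl : 1 ≤ ℓ) (g : P ℓ (D+1)) : g ∈ SS ℓ D := by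
  have hgen : g ∈ Subgroup.closure (Set.range
      (PresentedGroup.of : Fin (D+1) → P ℓ (D+1))) := by
    rw [PresentedGroup.closure_range_of]; trivial
  have key : ∀ (x : P ℓ (D+1)), x ∈ SS ℓ D → ∀ i : Fin (D+1),
      (x * PresentedGroup.of i ∈ SS ℓ D ∧ x * (PresentedGroup.of i)⁻¹ ∈ SS ℓ D) := by
    intro x hx i
    rw [of_eq_S]
    constructor
    · exact SS_mul_S hx (by omega)
    · -- (S i.val)⁻¹ = S i.val ^ (c - 1) with S^c = 1
      rcases Nat.eq_zero_or_pos i.val with h0 | h1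
      · have hc : S ℓ (D+1) i.val ^ ℓ = 1 := by rw [h0]; exact hS0 (by omega)
        have : (S ℓ (D+1) i.val)⁻¹ = S ℓ (D+1) i.val ^ (ℓ - 1) := by
          apply inv_eq_of_mul_eq_one_right
          rw [← pow_succ', Nat.sub_add_cancel hl, hc]
        rw [this]
        exact SS_mul_S_pow hx (by omega) _
      · have : (S ℓ (D+1) i.val)⁻¹ = S ℓ (D+1) i.val := hS1inv h1 i.isLt
        rw [this]
        exact SS_mul_S hx (by omega)
  have := Subgroup.closure_induction_right (p := fun x _ => x ∈ SS ℓ D)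
    (one_mem_SS) (fun x _ y hy hx => by
      obtain ⟨i, rfl⟩ := hy; exact (key x hx i).1)
    (fun x _ y hy hx => by
      obtain ⟨i, rfl⟩ := hy; exact (key x hx i).2) hgen
  simpa using this

lemma covering (hl : 1 ≤ ℓ) (g : P ℓ (D+1)) :
    ∃ (h' : P ℓ D) (j m : ℕ), j ≤ D ∧ m < ℓ ∧
      g = ι ℓ D h' * (T ℓ (D+1) D ^ m * V ℓ (D+1) D j) := by
  obtain ⟨h', j, m, hj, rfl⟩ := mem_SS hl g
  refine ⟨h', j, m % ℓ, hj, Nat.mod_lt _ (by omega), ?_⟩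
  rw [← pow_mod_of_pow_eq_one (T_pow (by omega)) m]

lemma finite_and_card (hl : 1 ≤ ℓ) :
    ∀ D, ∃ _ : Finite (P ℓ D), Nat.card (P ℓ D) ≤ ℓ ^ D * D.factorial := by
  intro D
  induction D with
  | zero =>
    have hsub : Subsingleton (P ℓ 0) := by
      constructor
      intro a b
      have h1 : ∀ x : P ℓ 0, x = 1 := by
        intro x
        have := PresentedGroup.generated_by (wreathRels ℓ 0) ⊥ (fun j => j.elim0) x
        simpa [Subgroup.mem_bot] using this
      rw [h1 a, h1 b]
    refine ⟨Finite.of_subsingleton, ?_⟩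
    simp only [pow_zero, Nat.factorial_zero, mul_one]
    have : Nat.card (P ℓ 0) = 1 :=
      Nat.card_eq_one_iff_unique.2 ⟨hsub, ⟨1⟩⟩
    omega
  | succ D ih =>
    obtain ⟨hfin, hcard⟩ := ih
    have hl0 : 0 < ℓ := hl
    set F : P ℓ D × Fin (D+1) × Fin ℓ → P ℓ (D+1) :=
      fun x => ι ℓ D x.1 * (T ℓ (D+1) D ^ (x.2.2 : ℕ) * V ℓ (D+1) D (x.2.1 : ℕ)) with hF
    have hsurj : Function.Surjective F := by
      intro g
      obtain ⟨h', j, m, hj, hm, hg⟩ := covering hl g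
      exact ⟨(h', ⟨j, by omega⟩, ⟨m, hm⟩), hg.symm⟩
    have hfin' : Finite (P ℓ (D+1)) := Finite.of_surjective F hsurj
    refine ⟨hfin', ?_⟩
    have hle := Nat.card_le_card_of_surjective F hsurj
    have hle2 : Nat.card (P ℓ D × Fin (D+1) × Fin ℓ) =
        Nat.card (P ℓ D) * ((D+1) * ℓ) := by
      rw [Nat.card_prod, Nat.card_prod, Nat.card_eq_fintype_card (α := Fin (D+1)),
        Nat.card_eq_fintype_card (α := Fin ℓ), Fintype.card_fin, Fintype.card_fin]
    calc Nat.card (P ℓ (D+1)) ≤ Nat.card (P ℓ D) * ((D+1) * ℓ) := by rw [← hle2]; exact hle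
    _ ≤ (ℓ ^ D * D.factorial) * ((D+1) * ℓ) := by
        exact Nat.mul_le_mul_right _ hcard
    _ = ℓ ^ (D+1) * (D+1).factorial := by
        rw [pow_succ, Nat.factorial_succ]; ring


/-! ### The homomorphism to `W ℓ d` -/

open SemidirectProduct Equiv Multiplicative

lemma sdp_rel3 {N G : Type*} [CommGroup N] [Group G] {φ : G →* MulAut N}
    (a : N) (s : G) (hs : s * s = 1) :
    inl a * inr s * inl a * inr s = inr s * inl a * inr s * (inl a : N ⋊[φ] G) := by
  ext
  · simp only [mul_left, mul_right, left_inl, right_inl, left_inr, right_inr, map_one,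
      MulAut.one_apply, mul_one, one_mul, map_mul, ← mul_assoc, hs]
    rw [mul_comm]
  · simp [mul_right]

lemma sdp_comm_mixed {N G : Type*} [CommGroup N] [Group G] {φ : G →* MulAut N}
    (a : N) (s : G) (h : φ s a = a) :
    inl a * inr s = (inr s * inl a : N ⋊[φ] G) := by
  ext <;> simp [mul_left, mul_right, h]

lemma braid_swap {α : Type*} [DecidableEq α] {x y z : α} (hxy : x ≠ y) (hyz : y ≠ z)
    (hxz : x ≠ z) : swap x y * swap y z * swap x y = swap y z * swap x y * swap y z := by
  have h1 : swap x y * swap y z * (swap x y)⁻¹ = swap ((swap x y) y) ((swap x y) z) :=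
    (swap_apply_apply _ _ _).symm
  have h2 : swap y z * swap x y * (swap y z)⁻¹ = swap ((swap y z) x) ((swap y z) y) :=
    (swap_apply_apply _ _ _).symm
  rw [swap_inv] at h1 h2
  rw [h1, h2, swap_apply_right, swap_apply_left, swap_apply_of_ne_of_ne hxz.symm hyz.symm,
    swap_apply_of_ne_of_ne hxy hxz]

lemma swap_comm_swap {α : Type*} [DecidableEq α] {a b c e : α} (h1 : a ≠ c) (h2 : a ≠ e)
    (h3 : b ≠ c) (h4 : b ≠ e) : swap a b * swap c e = swap c e * swap a b := by
  have h := (swap_apply_apply (swap c e) a b).symm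
  rw [swap_inv, swap_apply_of_ne_of_ne h1 h2, swap_apply_of_ne_of_ne h3 h4] at h
  conv_lhs => rw [← h]
  rw [mul_assoc, swap_mul_self, mul_one]

lemma sdp_pow_inl {N G : Type*} [Group N] [Group G] {φ : G →* MulAut N}
    (a : N) (n : ℕ) (h : a ^ n = 1) : (inl a : N ⋊[φ] G) ^ n = 1 := by
  rw [← map_pow, h, map_one]

lemma sdp_pow_inr {N G : Type*} [Group N] [Group G] {φ : G →* MulAut N}
    (s : G) (n : ℕ) (h : s ^ n = 1) : (inr s : N ⋊[φ] G) ^ n = 1 := by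
  rw [← map_pow, h, map_one]

lemma sdp_braid {N G : Type*} [Group N] [Group G] {φ : G →* MulAut N}
    (s t : G) (h : s * t * s = t * s * t) :
    inr s * inr t * inr s = (inr t * inr s * inr t : N ⋊[φ] G) := by
  rw [← map_mul, ← map_mul, ← map_mul, ← map_mul, h]

lemma sdp_comm_inr {N G : Type*} [Group N] [Group G] {φ : G →* MulAut N}
    (s t : G) (h : s * t = t * s) :
    inr s * inr t = (inr t * inr s : N ⋊[φ] G) := by
  rw [← map_mul, ← map_mul, h]

variable (ℓ) in
def fgen {d : ℕ} (hd : 1 ≤ d) : Fin d → W ℓ d := fun i =>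
  if _ : i.val = 0 then
    ⟨Pi.mulSingle (⟨0, hd⟩ : Fin d) (Multiplicative.ofAdd (1 : ZMod ℓ)), 1⟩
  else ⟨1, Equiv.swap ⟨i.val - 1, Nat.lt_of_le_of_lt (Nat.sub_le _ _) i.isLt⟩ i⟩

variable {d : ℕ} {hd : 1 ≤ d}

lemma fgen_zero {i : Fin d} (h : i.val = 0) :
    fgen ℓ hd i = inl (Pi.mulSingle (⟨0, hd⟩ : Fin d) (ofAdd (1 : ZMod ℓ))) := by
  rw [fgen]; exact (dif_pos h).trans rfl

lemma fgen_pos {i : Fin d} (h : 1 ≤ i.val) :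
    fgen ℓ hd i =
      inr (swap (⟨i.val - 1, Nat.lt_of_le_of_lt (Nat.sub_le _ _) i.isLt⟩ : Fin d) i) := by
  rw [fgen]; exact (dif_neg (show ¬ i.val = 0 by omega)).trans rfl

lemma permMulAut_apply (σ : Perm (Fin d)) (a : Fin d → Multiplicative (ZMod ℓ)) (k : Fin d) :
    (permMulAut ℓ d σ a) k = a (σ⁻¹ k) := rfl

lemma permMulAut_single (σ : Perm (Fin d)) (x : Fin d) (g : Multiplicative (ZMod ℓ)) :
    permMulAut ℓ d σ (Pi.mulSingle x g) = Pi.mulSingle (σ x) g := by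
  funext k
  rw [permMulAut_apply]
  rcases eq_or_ne k (σ x) with rfl | hk
  · rw [Equiv.Perm.inv_def, Equiv.symm_apply_apply, Pi.mulSingle_eq_same, Pi.mulSingle_eq_same]
  · have h2 : σ⁻¹ k ≠ x := fun h => hk (by rw [← h]; simp)
    rw [Pi.mulSingle_apply, Pi.mulSingle_apply, if_neg h2, if_neg hk]

lemma single_pow_ell (x : Fin d) :
    (Pi.mulSingle x (ofAdd (1 : ZMod ℓ)) : Fin d → Multiplicative (ZMod ℓ)) ^ ℓ = 1 := by
  have h1 : (ofAdd (1 : ZMod ℓ)) ^ ℓ = 1 := by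
    rw [← ofAdd_nsmul]; simp [nsmul_eq_mul]
  rw [← Pi.mulSingle_pow, h1, Pi.mulSingle_one]


lemma lift_rels : ∀ r ∈ wreathRels ℓ d, FreeGroup.lift (fgen ℓ hd) r = 1 := by
  intro r hr
  rcases hr with ⟨i, hi, rfl⟩ | ⟨i, hi, rfl⟩ | ⟨i, j, hi, hj, rfl⟩ | ⟨i, j, hi, hj, rfl⟩ |
    ⟨i, j, hij, rfl⟩
  · rw [map_pow, FreeGroup.lift_apply_of, fgen_zero hi]
    exact sdp_pow_inl _ _ (single_pow_ell _)
  · rw [map_pow, FreeGroup.lift_apply_of, fgen_pos hi]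
    exact sdp_pow_inr _ _ (by rw [pow_two, swap_mul_self])
  · simp only [map_mul, map_inv, FreeGroup.lift_apply_of]
    rw [fgen_zero hi, fgen_pos (show 1 ≤ j.val by omega), mul_inv_eq_one]
    exact sdp_rel3 _ _ (swap_mul_self _ _)
  · simp only [map_mul, map_inv, FreeGroup.lift_apply_of]
    rw [fgen_pos hi, fgen_pos (show 1 ≤ j.val by omega), mul_inv_eq_one]
    have hji : (⟨j.val - 1, Nat.lt_of_le_of_lt (Nat.sub_le _ _) j.isLt⟩ : Fin d) = i :=
      Fin.ext (show j.val - 1 = i.val by omega)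
    rw [hji]
    have e1 : (⟨i.val - 1, Nat.lt_of_le_of_lt (Nat.sub_le _ _) i.isLt⟩ : Fin d) ≠ i :=
      Fin.ne_of_val_ne (show i.val - 1 ≠ i.val by omega)
    have e2 : i ≠ j := Fin.ne_of_val_ne (show i.val ≠ j.val by omega)
    have e3 : (⟨i.val - 1, Nat.lt_of_le_of_lt (Nat.sub_le _ _) i.isLt⟩ : Fin d) ≠ j :=
      Fin.ne_of_val_ne (show i.val - 1 ≠ j.val by omega)
    exact sdp_braid _ _ (braid_swap e1 e2 e3)
  · simp only [map_mul, map_inv, FreeGroup.lift_apply_of]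
    rw [mul_inv_eq_one]
    rcases Nat.eq_zero_or_pos i.val with hi0 | hi1
    · have hj2 : 2 ≤ j.val := by omega
      rw [fgen_zero hi0, fgen_pos (show 1 ≤ j.val by omega)]
      apply sdp_comm_mixed
      rw [permMulAut_single]
      have h1 : (⟨0, hd⟩ : Fin d) ≠ ⟨j.val - 1, Nat.lt_of_le_of_lt (Nat.sub_le _ _) j.isLt⟩ :=
        Fin.ne_of_val_ne (show 0 ≠ j.val - 1 by omega)
      have h2 : (⟨0, hd⟩ : Fin d) ≠ j := Fin.ne_of_val_ne (show 0 ≠ j.val by omega)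
      rw [swap_apply_of_ne_of_ne h1 h2]
    · rcases Nat.eq_zero_or_pos j.val with hj0 | hj1
      · have hi2 : 2 ≤ i.val := by omega
        rw [fgen_zero hj0, fgen_pos hi1]
        refine (sdp_comm_mixed _ _ ?_).symm
        rw [permMulAut_single]
        have h1 : (⟨0, hd⟩ : Fin d) ≠ ⟨i.val - 1, Nat.lt_of_le_of_lt (Nat.sub_le _ _) i.isLt⟩ :=
          Fin.ne_of_val_ne (show 0 ≠ i.val - 1 by omega)
        have h2 : (⟨0, hd⟩ : Fin d) ≠ i := Fin.ne_of_val_ne (show 0 ≠ i.val by omega)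
        rw [swap_apply_of_ne_of_ne h1 h2]
      · rw [fgen_pos hi1, fgen_pos hj1]
        have e1 : (⟨i.val - 1, Nat.lt_of_le_of_lt (Nat.sub_le _ _) i.isLt⟩ : Fin d) ≠
            ⟨j.val - 1, Nat.lt_of_le_of_lt (Nat.sub_le _ _) j.isLt⟩ :=
          Fin.ne_of_val_ne (show i.val - 1 ≠ j.val - 1 by omega)
        have e2 : (⟨i.val - 1, Nat.lt_of_le_of_lt (Nat.sub_le _ _) i.isLt⟩ : Fin d) ≠ j :=
          Fin.ne_of_val_ne (show i.val - 1 ≠ j.val by omega)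
        have e3 : i ≠ ⟨j.val - 1, Nat.lt_of_le_of_lt (Nat.sub_le _ _) j.isLt⟩ :=
          Fin.ne_of_val_ne (show i.val ≠ j.val - 1 by omega)
        have e4 : i ≠ j := Fin.ne_of_val_ne (show i.val ≠ j.val by omega)
        exact sdp_comm_inr _ _ (swap_comm_swap e1 e2 e3 e4)


variable (ℓ) in
noncomputable def phi (hd : 1 ≤ d) : P ℓ d →* W ℓ d :=
  PresentedGroup.toGroup (lift_rels (ℓ := ℓ) (hd := hd))

lemma phi_of (i : Fin d) : phi ℓ hd (PresentedGroup.of i) = fgen ℓ hd i :=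
  PresentedGroup.toGroup.of _

lemma phi_surj (hl : 1 ≤ ℓ) : Function.Surjective (phi ℓ (d := d) hd) := by
  haveI : NeZero ℓ := ⟨by omega⟩
  rw [← MonoidHom.range_eq_top]
  rw [eq_top_iff]
  set R := (phi ℓ (d := d) hd).range with hR
  have hgen : ∀ i : Fin d, fgen ℓ hd i ∈ R := fun i => ⟨PresentedGroup.of i, phi_of i⟩
  have hinr : ∀ σ : Perm (Fin d), (inr σ : W ℓ d) ∈ R := by
    obtain ⟨n, rfl⟩ : ∃ n, d = n + 1 := ⟨d - 1, by omega⟩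
    intro σ
    have hσ : σ ∈ Submonoid.closure
        (Set.range fun i : Fin n => swap (Fin.castSucc i) (Fin.succ i)) := by
      rw [Equiv.Perm.mclosure_swap_castSucc_succ]; trivial
    induction hσ using Submonoid.closure_induction with
    | mem x hx =>
      obtain ⟨i, rfl⟩ := hx
      set k : Fin (n+1) := ⟨i.val + 1, by omega⟩ with hk
      have h1 : Fin.succ i = k := Fin.ext (by simp [hk])
      have h2 : Fin.castSucc i =
          ⟨k.val - 1, Nat.lt_of_le_of_lt (Nat.sub_le _ _) k.isLt⟩ := Fin.ext (by simp [hk])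
      show (inr (swap (Fin.castSucc i) (Fin.succ i)) : W ℓ (n+1)) ∈ R
      rw [h1, h2, ← fgen_pos (hd := hd) (show 1 ≤ k.val by simp [hk])]
      exact hgen k
    | one => rw [map_one]; exact one_mem R
    | mul x y _ _ hx hy => rw [map_mul]; exact mul_mem hx hy
  have hx1 : ∀ x : Fin d, (inl (Pi.mulSingle x (ofAdd (1 : ZMod ℓ))) : W ℓ d) ∈ R := by
    intro x
    have h0 : (inl (Pi.mulSingle (⟨0, hd⟩ : Fin d) (ofAdd (1 : ZMod ℓ))) : W ℓ d) ∈ R := by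
      rw [← fgen_zero (hd := hd) (i := ⟨0, hd⟩) rfl]; exact hgen _
    have heq : (inl (Pi.mulSingle x (ofAdd (1 : ZMod ℓ))) : W ℓ d) =
        inr (swap (⟨0, hd⟩ : Fin d) x) * inl (Pi.mulSingle (⟨0, hd⟩ : Fin d)
          (ofAdd (1 : ZMod ℓ))) * (inr (swap (⟨0, hd⟩ : Fin d) x))⁻¹ := by
      rw [← map_inv, ← inl_aut, permMulAut_single, swap_apply_left]
    rw [heq]
    exact mul_mem (mul_mem (hinr _) h0) (inv_mem (hinr _))
  have hx : ∀ (x : Fin d) (g : Multiplicative (ZMod ℓ)),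
      (inl (Pi.mulSingle x g) : W ℓ d) ∈ R := by
    intro x g
    have hg : Pi.mulSingle x g =
        (Pi.mulSingle x (ofAdd (1 : ZMod ℓ)) : Fin d → Multiplicative (ZMod ℓ))
          ^ ((toAdd g).val) := by
      rw [← Pi.mulSingle_pow, ← ofAdd_nsmul, nsmul_eq_mul, mul_one,
        ZMod.natCast_rightInverse (toAdd g)]
      rfl
    rw [hg, map_pow]
    exact pow_mem (hx1 x) _
  have hinl : ∀ a : Fin d → Multiplicative (ZMod ℓ), (inl a : W ℓ d) ∈ R := by
    intro a
    have hmem : a ∈ R.comap (SemidirectProduct.inl :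
        (Fin d → Multiplicative (ZMod ℓ)) →* W ℓ d) := by
      rw [← Finset.univ_prod_mulSingle a]
      exact prod_mem (fun j _ => Subgroup.mem_comap.mpr (hx j (a j)))
    exact Subgroup.mem_comap.mp hmem
  intro w _
  rw [← inl_left_mul_inr_right w]
  exact mul_mem (hinl _) (hinr _)

lemma card_W (hl : 1 ≤ ℓ) : Nat.card (W ℓ d) = ℓ ^ d * d.factorial := by
  haveI : NeZero ℓ := ⟨by omega⟩
  have E : W ℓ d ≃ (Fin d → Multiplicative (ZMod ℓ)) × Perm (Fin d) :=
    ⟨fun x => (x.left, x.right), fun p => ⟨p.1, p.2⟩, fun x => by cases x; rfl,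
      fun p => rfl⟩
  rw [Nat.card_congr E, Nat.card_prod, Nat.card_fun,
    Nat.card_congr (Multiplicative.toAdd (α := ZMod ℓ)), Nat.card_zmod,
    Nat.card_eq_fintype_card (α := Fin d), Fintype.card_fin,
    Nat.card_eq_fintype_card (α := Perm (Fin d)), Fintype.card_perm, Fintype.card_fin]

end WreathAux

/-- **Presentation (3) of the generalized symmetric group.** The presented group on
generators `s_0, …, s_{d-1}` with relations `s_0^ℓ = 1`, `s_i² = 1` (`i ≥ 1`),
`s_0s_1s_0s_1 = s_1s_0s_1s_0`, the braid relations, and the commuting relations, is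
isomorphic to `W(ℓ,d) = C_ℓ ≀ S_d`, via `s_0 ↦ (Pi.mulSingle 0 (ofAdd 1), 1)` and
`s_i ↦ (1, swap (i-1) i)` for `1 ≤ i ≤ d-1`. -/
theorem presentedGroup_iso_wreath (ℓ d : ℕ) (hl : 1 ≤ ℓ) (hd : 1 ≤ d) :
    ∃ e : PresentedGroup (wreathRels ℓ d) ≃* W ℓ d,
      (∀ i : Fin d, i.val = 0 →
        e (PresentedGroup.of i) =
          ⟨Pi.mulSingle (⟨0, hd⟩ : Fin d) (Multiplicative.ofAdd (1 : ZMod ℓ)), 1⟩) ∧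
      (∀ i : Fin d, 1 ≤ i.val →
        e (PresentedGroup.of i) =
          ⟨1, Equiv.swap ⟨i.val - 1, Nat.lt_of_le_of_lt (Nat.sub_le _ _) i.isLt⟩ i⟩) := by
  classical
  obtain ⟨hfin, hcard⟩ := WreathAux.finite_and_card (ℓ := ℓ) hl d
  haveI := hfin
  have hsurj : Function.Surjective (WreathAux.phi ℓ hd) := WreathAux.phi_surj hl
  have hcw : Nat.card (W ℓ d) = ℓ ^ d * d.factorial := WreathAux.card_W hl
  have hle1 : Nat.card (PresentedGroup (wreathRels ℓ d)) ≤ Nat.card (W ℓ d) := by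
    rw [hcw]; exact hcard
  have hle2 : Nat.card (W ℓ d) ≤ Nat.card (PresentedGroup (wreathRels ℓ d)) :=
    Nat.card_le_card_of_surjective _ hsurj
  have hbij : Function.Bijective (WreathAux.phi ℓ hd) :=
    (Nat.bijective_iff_surjective_and_card _).2 ⟨hsurj, le_antisymm hle1 hle2⟩
  refine ⟨MulEquiv.ofBijective _ hbij, ?_, ?_⟩
  · intro i h0
    show WreathAux.phi ℓ hd (PresentedGroup.of i) = _
    rw [WreathAux.phi_of]
    simp only [WreathAux.fgen]
    exact dif_pos h0
  · intro i h1
    show WreathAux.phi ℓ hd (PresentedGroup.of i) = _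
    rw [WreathAux.phi_of]
    simp only [WreathAux.fgen]
    exact dif_neg (show ¬ i.val = 0 by omega)
end

section
/- Let d ≥ 1 and ℓ ≥ 1 and let ξ ∈ ℂ be a primitive ℓ-th root of unity. The ℂ-subalgebra of the algebra of all functions (Fin d → ZMod ℓ) → ℂ (with pointwise operations) generated by the d functions χ_j (j : Fin d), where χ_j f = ξ^{(f j).val}, is the whole function algebra. (The key step in the proof of surjectivity in Theorem 7: the elements Φ(s_0^{(j)}) generate the full diagonal subalgebra B of the groupoid algebra.) -/
/-- **Key step in the surjectivity proof of Theorem 7.** The ℂ-subalgebra of the algebra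
of all ℂ-valued functions on `Fin d → ZMod ℓ` (with pointwise operations) generated by
the `d` characters `χ_j : f ↦ ξ^{(f j).val}`, where `ξ` is a primitive `ℓ`-th root of
unity, is the whole function algebra. -/
theorem adjoin_characters_eq_top (d ℓ : ℕ) (hd : 1 ≤ d) (hl : 1 ≤ ℓ)
    (ξ : ℂ) (hξ : IsPrimitiveRoot ξ ℓ) :
    Algebra.adjoin ℂ
      {χ : (Fin d → ZMod ℓ) → ℂ | ∃ j : Fin d, χ = fun f => ξ ^ (f j).val} = ⊤ := by
  haveI : NeZero ℓ := ⟨by omega⟩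
  set A := Algebra.adjoin ℂ
      {χ : (Fin d → ZMod ℓ) → ℂ | ∃ j : Fin d, χ = fun f => ξ ^ (f j).val} with hA
  have hχ : ∀ j : Fin d, (fun f : Fin d → ZMod ℓ => ξ ^ (f j).val) ∈ A :=
    fun j => Algebra.subset_adjoin ⟨j, rfl⟩
  have hξ0 : ξ ≠ 0 := hξ.ne_zero (by omega)
  have hne : (ℓ : ℂ) ≠ 0 := Nat.cast_ne_zero.mpr (by omega)
  have he : ∀ (j : Fin d) (a : ZMod ℓ),
      (fun f : Fin d → ZMod ℓ => if f j = a then (1:ℂ) else 0) ∈ A := by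
    intro j a
    have key : (fun f : Fin d → ZMod ℓ => if f j = a then (1:ℂ) else 0)
        = (ℓ:ℂ)⁻¹ • ∑ k ∈ Finset.range ℓ,
            ((ξ ^ a.val)⁻¹) ^ k • (fun f : Fin d → ZMod ℓ => ξ ^ (f j).val) ^ k := by
      funext f
      simp only [Pi.smul_apply, Finset.sum_apply, Pi.pow_apply, smul_eq_mul]
      have hz : ∀ k, ((ξ ^ a.val)⁻¹) ^ k * (ξ ^ (f j).val) ^ k
          = ((ξ ^ a.val)⁻¹ * ξ ^ (f j).val) ^ k := fun k => (mul_pow _ _ k).symm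
      simp only [hz]
      set z : ℂ := (ξ ^ a.val)⁻¹ * ξ ^ (f j).val with hzdef
      have hzl : z ^ ℓ = 1 := by
        rw [hzdef, mul_pow, inv_pow, ← pow_mul, ← pow_mul, mul_comm a.val ℓ,
          mul_comm (f j).val ℓ, pow_mul, pow_mul, hξ.pow_eq_one, one_pow, one_pow,
          inv_one, one_mul]
      by_cases h : f j = a
      · have : z = 1 := by
          rw [hzdef, h, inv_mul_cancel₀ (pow_ne_zero _ hξ0)]
        simp [this, h, inv_mul_cancel₀ hne]
      · have hz1 : z ≠ 1 := by
          intro hc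
          apply h
          have : ξ ^ (f j).val = ξ ^ a.val := by
            have := hc
            rw [hzdef] at this
            field_simp at this
            linear_combination this
          exact ZMod.val_injective ℓ (hξ.pow_inj (ZMod.val_lt _) (ZMod.val_lt _) this)
        rw [if_neg h, geom_sum_eq hz1, hzl, sub_self, zero_div, mul_zero]
    rw [key]
    exact Subalgebra.smul_mem _ (Subalgebra.sum_mem _ fun k _ =>
      Subalgebra.smul_mem _ (Subalgebra.pow_mem _ (hχ j) k) _) _
  have hδ : ∀ g : Fin d → ZMod ℓ,
      (fun f : Fin d → ZMod ℓ => if f = g then (1:ℂ) else 0) ∈ A := by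
    intro g
    have : (fun f : Fin d → ZMod ℓ => if f = g then (1:ℂ) else 0)
        = ∏ j : Fin d, (fun f : Fin d → ZMod ℓ => if f j = g j then (1:ℂ) else 0) := by
      funext f
      rw [Finset.prod_apply]
      by_cases h : f = g
      · simp [h]
      · obtain ⟨j, hj⟩ := Function.ne_iff.mp h
        rw [if_neg h]
        symm
        apply Finset.prod_eq_zero (Finset.mem_univ j)
        simp [hj]
    rw [this]
    exact Subalgebra.prod_mem _ fun j _ => he j (g j)
  rw [eq_top_iff]
  rintro F -
  have : F = ∑ g : Fin d → ZMod ℓ,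
      F g • (fun f : Fin d → ZMod ℓ => if f = g then (1:ℂ) else 0) := by
    funext f
    simp [Finset.sum_apply, Pi.smul_apply, eq_comm]
  rw [this]
  exact Subalgebra.sum_mem _ fun g _ => Subalgebra.smul_mem _ (hδ g) _
end

section
/- Let d ≥ 2. There exists a unique ℂ-algebra homomorphism Ψ : MonoidAlgebra ℂ (W(2,d)) → MonoidAlgebra ℂ (IS_d) such that Ψ(single (1,σ) 1) = single (Equiv.toPEquiv σ) 1 for every permutation σ of Fin d, and Ψ(single s₀ 1) = 2·(single ε₁ 1) − single 1 1, where s₀ := (Pi.single 0 (Multiplicative.ofAdd (1 : ZMod 2)), 1) ∈ W(2,d) and ε₁ ∈ IS_d is the identity partial bijection defined exactly on Fin d \ {0}; moreover Ψ is surjective. (Lemma 15: the epimorphism from the group algebra of the type B Weyl group onto the algebra of the symmetric inverse semigroup.) -/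
/-- The symmetric inverse semigroup (rook monoid) `IS_d`: partial bijections of `Fin d`
under composition, `(f * g) x = f (g x)`, with the total identity as unit. -/
instance rookMonoid (d : ℕ) : Monoid (PEquiv (Fin d) (Fin d)) where
  mul f g := g.trans f
  one := PEquiv.refl (Fin d)
  mul_assoc f g h := (PEquiv.trans_assoc h g f).symm
  one_mul f := PEquiv.trans_refl f
  mul_one f := PEquiv.refl_trans f

/-- The identity partial bijection defined exactly on `Fin d \ {0}`. -/
def eps1 (d : ℕ) [NeZero d] : PEquiv (Fin d) (Fin d) where
  toFun j := if j = 0 then none else some j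
  invFun j := if j = 0 then none else some j
  inv a b := by
    by_cases ha : a = 0 <;> by_cases hb : b = 0 <;>
      simp [ha, hb, eq_comm]

set_option linter.unusedSectionVars false

namespace Lemma15

variable {d : ℕ} [NeZero d]

abbrev IS (d : ℕ) := PEquiv (Fin d) (Fin d)

lemma mul_apply (f g : IS d) (x : Fin d) : (f * g) x = (g x).bind f := rfl

/-- identity partial bijection defined away from `j` -/
def epsAt (j : Fin d) : IS d where
  toFun x := if x = j then none else some x
  invFun x := if x = j then none else some x
  inv a b := by
    by_cases ha : a = j <;> by_cases hb : b = j <;>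
      simp [ha, hb, eq_comm] <;> omega

lemma epsAt_apply (j x : Fin d) : epsAt j x = if x = j then none else some x := rfl

lemma eps1_eq_epsAt : eps1 d = epsAt (0 : Fin d) := rfl

lemma epsAt_mul_self (j : Fin d) : epsAt j * epsAt j = epsAt (d := d) j := by
  ext x
  by_cases h : x = j <;> simp [mul_apply, epsAt_apply, h]

lemma epsAt_comm (j k : Fin d) : epsAt j * epsAt k = epsAt k * epsAt j := by
  ext x
  by_cases hj : x = j <;> by_cases hk : x = k <;> subst_vars <;>
    simp_all [mul_apply, epsAt_apply] <;> split <;> simp_all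

lemma toPEquiv_one : (1 : Equiv.Perm (Fin d)).toPEquiv = (1 : IS d) := rfl

lemma toPEquiv_mul (σ τ : Equiv.Perm (Fin d)) :
    (σ * τ).toPEquiv = σ.toPEquiv * τ.toPEquiv := by
  ext x
  simp [mul_apply, Equiv.toPEquiv_apply, Equiv.Perm.mul_apply]

lemma toPEquiv_conj_epsAt (σ : Equiv.Perm (Fin d)) (j : Fin d) :
    σ.toPEquiv * epsAt j * (σ⁻¹).toPEquiv = epsAt (σ j) := by
  ext x
  by_cases h : x = σ j
  · simp [mul_apply, Equiv.toPEquiv_apply, epsAt_apply, h]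
  · have h' : σ⁻¹ x ≠ j := fun hc => h (by simp [← hc])
    simp [mul_apply, Equiv.toPEquiv_apply, epsAt_apply, h, show σ.symm x ≠ j from h']

/-- extend a partial bijection by `j ↦ k` -/
def extendPt (p : IS d) (j k : Fin d) (hj : p j = none) (hk : p.symm k = none) : IS d where
  toFun x := if x = j then some k else p x
  invFun y := if y = k then some j else p.symm y
  inv a b := by
    by_cases ha : a = j <;> by_cases hb : b = k
    · subst ha; subst hb; simp
    · subst ha
      rw [if_neg hb, if_pos rfl, p.eq_some_iff, hj]
      simp [Ne.symm hb]
    · subst hb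
      rw [if_pos rfl, if_neg ha]
      constructor
      · intro h; simp at h; exact absurd h.symm ha
      · intro h
        have h2 := p.eq_some_iff.mpr h
        rw [hk] at h2; cases h2
    · rw [if_neg hb, if_neg ha]
      exact p.eq_some_iff

lemma mul_epsAt_apply (p : IS d) (j x : Fin d) :
    (p * epsAt j) x = if x = j then none else p x := by
  by_cases h : x = j <;> simp [mul_apply, epsAt_apply, h]

/-- every partial bijection is a product of permutations and `epsAt`'s -/
lemma mem_closure_rook (p : IS d) :
    p ∈ Submonoid.closure
      ((Set.range fun σ : Equiv.Perm (Fin d) => σ.toPEquiv) ∪ Set.range (epsAt (d := d))) := by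
  set S := Submonoid.closure
      ((Set.range fun σ : Equiv.Perm (Fin d) => σ.toPEquiv) ∪ Set.range (epsAt (d := d))) with hS
  have hperm : ∀ σ : Equiv.Perm (Fin d), σ.toPEquiv ∈ S := fun σ =>
    Submonoid.subset_closure (Or.inl ⟨σ, rfl⟩)
  have heps : ∀ j : Fin d, epsAt j ∈ S := fun j => Submonoid.subset_closure (Or.inr ⟨j, rfl⟩)
  suffices H : ∀ n (p : IS d), (Finset.univ.filter fun x => p x = none).card = n → p ∈ S by
    exact H _ p rfl
  intro n
  induction n with
  | zero =>
    intro p hp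
    have htot : ∀ x, (p x).isSome := by
      intro x
      rcases h : p x with _ | y
      · exfalso
        have : x ∈ Finset.univ.filter fun x => p x = none := by simp [h]
        rw [Finset.card_eq_zero] at hp
        simp [hp] at this
      · rfl
    set f : Fin d → Fin d := fun x => (p x).get (htot x) with hf
    have hinj : Function.Injective f := by
      intro x y hxy
      exact p.inj (b := f x) (by simp [hf]) (by rw [hxy]; simp [hf])
    obtain ⟨σ, hσ⟩ : ∃ σ : Equiv.Perm (Fin d), ∀ x, σ x = f x :=
      ⟨Equiv.ofBijective f (Finite.injective_iff_bijective.mp hinj), fun x => rfl⟩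
    have : p = σ.toPEquiv := by
      ext x
      simp [Equiv.toPEquiv_apply, hσ, hf]
    rw [this]; exact hperm σ
  | succ n ih =>
    intro p hp
    obtain ⟨j, hj⟩ : ∃ j, p j = none := by
      by_contra h
      push_neg at h
      have : (Finset.univ.filter fun x => p x = none) = ∅ := by
        apply Finset.filter_eq_empty_iff.mpr; intro x _; exact h x
      rw [this] at hp; simp at hp
    obtain ⟨k, hk⟩ : ∃ k, p.symm k = none := by
      by_contra h
      push_neg at h
      have htot : ∀ x, p x ≠ none := by
        intro x hx
        have hsymtot : ∀ y, ((p.symm) y).isSome := by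
          intro y; rcases hy : p.symm y with _ | z
          · exact absurd hy (h y)
          · rfl
        have hg : ∀ y, p ((p.symm y).get (hsymtot y)) = some y := by
          intro y
          apply p.eq_some_iff.mp
          simp
        have hginj : Function.Injective fun y => (p.symm y).get (hsymtot y) := by
          intro y z hyz
          dsimp only at hyz
          have h1 := hg y
          have h2 := hg z
          rw [hyz, h2] at h1
          exact (Option.some_injective _ h1).symm
        have hsurj := Finite.injective_iff_surjective.mp hginj
        obtain ⟨y, hy⟩ := hsurj x
        dsimp only at hy
        have h1 := hg y
        rw [hy, hx] at h1
        cases h1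
      have : (Finset.univ.filter fun x => p x = none) = ∅ := by
        apply Finset.filter_eq_empty_iff.mpr; intro x _; exact htot x
      rw [this] at hp; simp at hp
    set p' := extendPt p j k hj hk with hp'
    have hdecomp : p = p' * epsAt j := by
      ext x
      rw [mul_epsAt_apply]
      by_cases h : x = j
      · simp [h, hj]
      · simp [hp', extendPt, h]
    have hcard : (Finset.univ.filter fun x => p' x = none).card = n := by
      have hset : (Finset.univ.filter fun x => p' x = none)
          = (Finset.univ.filter fun x => p x = none).erase j := by
        ext x
        simp only [Finset.mem_filter, Finset.mem_erase, Finset.mem_univ, true_and]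
        constructor
        · intro hx
          by_cases hxj : x = j
          · exfalso; rw [hxj] at hx; simp [hp', extendPt] at hx
          · refine ⟨hxj, ?_⟩
            simpa [hp', extendPt, hxj] using hx
        · rintro ⟨hxj, hx⟩
          simpa [hp', extendPt, hxj] using hx
      rw [hset, Finset.card_erase_of_mem (by simp [hj]), hp]; omega
    rw [hdecomp]
    exact S.mul_mem (ih p' hcard) (heps j)

/-! ### The group side -/

abbrev s₀ (d : ℕ) [NeZero d] : W 2 d :=
  ⟨Pi.mulSingle 0 (Multiplicative.ofAdd (1 : ZMod 2)), 1⟩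

lemma permMulAut_mulSingle (σ : Equiv.Perm (Fin d)) (j : Fin d)
    (x : Multiplicative (ZMod 2)) :
    permMulAut 2 d σ (Pi.mulSingle j x) = Pi.mulSingle (σ j) x := by
  have happ : ∀ (a : Fin d → Multiplicative (ZMod 2)) (i : Fin d),
      permMulAut 2 d σ a i = a (σ⁻¹ i) := fun a i => rfl
  funext i
  rw [happ]
  by_cases h : i = σ j
  · rw [h, Equiv.Perm.inv_def, Equiv.symm_apply_apply]
    simp
  · have : σ⁻¹ i ≠ j := fun hc => h (by simp [← hc])
    simp [Pi.mulSingle_apply, show σ.symm i ≠ j from this, h]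

lemma mem_closure_W (g : W 2 d) :
    g ∈ Submonoid.closure
      ((Set.range fun σ : Equiv.Perm (Fin d) => (⟨1, σ⟩ : W 2 d)) ∪ {s₀ d}) := by
  set S := Submonoid.closure
      ((Set.range fun σ : Equiv.Perm (Fin d) => (⟨1, σ⟩ : W 2 d)) ∪ {s₀ d}) with hS
  have hinr : ∀ σ : Equiv.Perm (Fin d), (SemidirectProduct.inr σ : W 2 d) ∈ S := fun σ =>
    Submonoid.subset_closure (Or.inl ⟨σ, rfl⟩)
  have hs0 : (s₀ d : W 2 d) ∈ S := Submonoid.subset_closure (Or.inr rfl)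
  have hinl1 : ∀ (j : Fin d) (x : Multiplicative (ZMod 2)),
      (SemidirectProduct.inl (Pi.mulSingle j x) : W 2 d) ∈ S := by
    intro j x
    have hxall : ∀ y : Multiplicative (ZMod 2),
        y = 1 ∨ y = Multiplicative.ofAdd (1 : ZMod 2) := by decide
    have hx := hxall x
    rcases hx with hx | hx
    · rw [hx, Pi.mulSingle_one, map_one]
      exact S.one_mem
    · rw [hx]
      have key : (Pi.mulSingle j (Multiplicative.ofAdd (1 : ZMod 2)) :
          Fin d → Multiplicative (ZMod 2)) =
          permMulAut 2 d (Equiv.swap 0 j) (Pi.mulSingle 0 (Multiplicative.ofAdd (1 : ZMod 2))) := by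
        rw [permMulAut_mulSingle]
        simp
      rw [key, SemidirectProduct.inl_aut]
      have hs0' : (SemidirectProduct.inl
          (Pi.mulSingle 0 (Multiplicative.ofAdd (1 : ZMod 2))) : W 2 d) = s₀ d := rfl
      rw [hs0']
      exact S.mul_mem (S.mul_mem (hinr _) hs0) (hinr _)
  have hinlprod : ∀ (s : Finset (Fin d)) (a : Fin d → Multiplicative (ZMod 2)),
      (SemidirectProduct.inl (∏ j ∈ s, Pi.mulSingle j (a j)) : W 2 d) ∈ S := by
    intro s
    induction s using Finset.induction_on with
    | empty => intro a; rw [Finset.prod_empty, map_one]; exact S.one_mem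
    | insert _ _ hni ih =>
      intro a
      rw [Finset.prod_insert hni, map_mul]
      exact S.mul_mem (hinl1 _ _) (ih a)
  have hinl : ∀ a : Fin d → Multiplicative (ZMod 2),
      (SemidirectProduct.inl a : W 2 d) ∈ S := by
    intro a
    have := hinlprod Finset.univ a
    rwa [Finset.univ_prod_mulSingle a] at this
  have : g = SemidirectProduct.inl g.left * SemidirectProduct.inr g.right :=
    (SemidirectProduct.inl_left_mul_inr_right g).symm
  rw [this]
  exact S.mul_mem (hinl _) (hinr _)

/-! ### The monoid algebra side -/

noncomputable abbrev A (d : ℕ) [NeZero d] : Type := MonoidAlgebra ℂ (IS d)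

noncomputable def tEps (j : Fin d) : A d :=
  2 • MonoidAlgebra.single (epsAt j) 1 - 1

lemma single_mul_single' (a b : IS d) :
    (MonoidAlgebra.single a (1 : ℂ)) * MonoidAlgebra.single b 1 =
      MonoidAlgebra.single (a * b) 1 := by
  rw [MonoidAlgebra.single_mul_single, one_mul]

lemma tEps_sq (j : Fin d) : tEps j * tEps j = 1 := by
  unfold tEps
  have h : (MonoidAlgebra.single (epsAt j) (1 : ℂ)) * MonoidAlgebra.single (epsAt j) 1 =
      MonoidAlgebra.single (epsAt j) 1 := by
    rw [single_mul_single', epsAt_mul_self]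
  rw [two_smul]
  set e := MonoidAlgebra.single (epsAt j) (1 : ℂ)
  simp only [sub_mul, mul_sub, add_mul, mul_add, h, mul_one, one_mul]
  abel

lemma tEps_commute (j k : Fin d) : Commute (tEps (d := d) j) (tEps k) := by
  have h : Commute (MonoidAlgebra.single (epsAt j) (1 : ℂ))
      (MonoidAlgebra.single (epsAt k) 1) := by
    show _ * _ = _ * _
    rw [single_mul_single', single_mul_single', epsAt_comm]
  unfold tEps
  exact ((h.smul_left 2).smul_right 2).sub_left (Commute.one_left _ |>.smul_right 2)
    |>.sub_right (Commute.one_right _)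

noncomputable def u (j : Fin d) : (A d)ˣ :=
  ⟨tEps j, tEps j, tEps_sq j, tEps_sq j⟩

lemma u_coe (j : Fin d) : ((u j : (A d)ˣ) : A d) = tEps j := rfl

lemma u_sq (j : Fin d) : u (d := d) j * u j = 1 :=
  Units.ext (by rw [Units.val_mul]; exact tEps_sq j)

lemma u_commute (j k : Fin d) : Commute (u (d := d) j) (u k) :=
  Units.ext (by rw [Units.val_mul, Units.val_mul]; exact tEps_commute j k)

/-- the hom `Multiplicative (ZMod 2) →* (A d)ˣ` sending the generator to `u j` -/
noncomputable def fZ (j : Fin d) : Multiplicative (ZMod 2) →* (A d)ˣ where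
  toFun x := u j ^ (Multiplicative.toAdd x).val
  map_one' := by
    show u j ^ (ZMod.val (0 : ZMod 2)) = 1
    rw [ZMod.val_zero, pow_zero]
  map_mul' x y := by
    have h2 : u (d := d) j ^ 2 = 1 := by rw [pow_two]; exact u_sq j
    have key : ∀ n, u (d := d) j ^ n = u j ^ (n % 2) := fun n => by
      conv_lhs => rw [← Nat.div_add_mod n 2]
      rw [pow_add, pow_mul, h2, one_pow, one_mul]
    show u j ^ (Multiplicative.toAdd x + Multiplicative.toAdd y).val = _
    rw [ZMod.val_add, ← key, pow_add]

lemma fZ_commute : Pairwise fun j k : Fin d => ∀ x y, Commute (fZ j x) (fZ k y) := by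
  intro j k _ x y
  exact (u_commute j k).pow_pow _ _

/-- the hom from the diagonal part -/
noncomputable def φN : (Fin d → Multiplicative (ZMod 2)) →* (A d)ˣ :=
  MonoidHom.noncommPiCoprod fZ fZ_commute

lemma φN_apply (a : Fin d → Multiplicative (ZMod 2)) :
    φN a = Finset.univ.noncommProd (fun j => fZ j (a j))
      (fun _ _ _ _ h => fZ_commute h _ _) := rfl

/-- the hom from permutations -/
noncomputable def permHom : Equiv.Perm (Fin d) →* IS d where
  toFun := Equiv.toPEquiv
  map_one' := toPEquiv_one
  map_mul' := toPEquiv_mul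

noncomputable def φP : Equiv.Perm (Fin d) →* (A d)ˣ :=
  ((MonoidAlgebra.of ℂ (IS d)).comp permHom).toHomUnits

lemma φP_coe (σ : Equiv.Perm (Fin d)) :
    ((φP σ : (A d)ˣ) : A d) = MonoidAlgebra.single σ.toPEquiv 1 := by
  rw [φP, MonoidHom.coe_toHomUnits]
  rfl

lemma conj_tEps (σ : Equiv.Perm (Fin d)) (j : Fin d) :
    MonoidAlgebra.single σ.toPEquiv (1 : ℂ) * tEps j *
      MonoidAlgebra.single (σ⁻¹).toPEquiv 1 = tEps (σ j) := by
  have h1 : MonoidAlgebra.single σ.toPEquiv (1 : ℂ) * MonoidAlgebra.single (epsAt j) 1 *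
      MonoidAlgebra.single (σ⁻¹).toPEquiv 1 = MonoidAlgebra.single (epsAt (σ j)) 1 := by
    rw [single_mul_single', single_mul_single', toPEquiv_conj_epsAt]
  have h2 : MonoidAlgebra.single σ.toPEquiv (1 : ℂ) * MonoidAlgebra.single (σ⁻¹).toPEquiv 1 =
      1 := by
    rw [single_mul_single', ← toPEquiv_mul, mul_inv_cancel, toPEquiv_one,
      ← MonoidAlgebra.one_def]
  unfold tEps
  calc MonoidAlgebra.single σ.toPEquiv (1 : ℂ) * (2 • MonoidAlgebra.single (epsAt j) 1 - 1) *
      MonoidAlgebra.single (σ⁻¹).toPEquiv 1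
      = 2 • (MonoidAlgebra.single σ.toPEquiv (1 : ℂ) * MonoidAlgebra.single (epsAt j) 1 *
          MonoidAlgebra.single (σ⁻¹).toPEquiv 1) -
          MonoidAlgebra.single σ.toPEquiv (1 : ℂ) * MonoidAlgebra.single (σ⁻¹).toPEquiv 1 := by
        rw [mul_sub, mul_one, sub_mul, mul_smul_comm, smul_mul_assoc]
  _ = 2 • MonoidAlgebra.single (epsAt (σ j)) 1 - 1 := by rw [h1, h2]

lemma conj_u (σ : Equiv.Perm (Fin d)) (j : Fin d) :
    MulAut.conj (φP σ) (u j) = u (σ j) := by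
  apply Units.ext
  rw [MulAut.conj_apply, Units.val_mul, Units.val_mul, ← map_inv, φP_coe, φP_coe, u_coe, u_coe]
  exact conj_tEps σ j

lemma compat (σ : Equiv.Perm (Fin d)) :
    (φN (d := d)).comp ((permMulAut 2 d σ)).toMonoidHom =
      (MulAut.conj (φP σ)).toMonoidHom.comp φN := by
  apply MonoidHom.ext
  intro a
  show φN (permMulAut 2 d σ a) = MulAut.conj (φP σ) (φN a)
  have hterm : ∀ (j : Fin d) (x : Multiplicative (ZMod 2)),
      MulAut.conj (φP σ) (fZ j x) = fZ (σ j) x := by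
    intro j x
    simp only [fZ, MonoidHom.coe_mk, OneHom.coe_mk, map_pow, conj_u]
  erw [φN_apply, φN_apply,
    Finset.map_noncommProd _ _ _ (MulAut.conj (φP σ))]
  have hσa : ∀ j : Fin d, permMulAut 2 d σ a j = a (σ⁻¹ j) := fun _ => rfl
  have hmult : Multiset.map (fun j => fZ j (permMulAut 2 d σ a j)) Finset.univ.val
      = Multiset.map (fun j => MulAut.conj (φP σ) (fZ j (a j))) Finset.univ.val := by
    calc Multiset.map (fun j => fZ j (permMulAut 2 d σ a j)) Finset.univ.val
        = Multiset.map (fun j => fZ j (a (σ⁻¹ j))) Finset.univ.val :=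
          Multiset.map_congr rfl (fun j _ => by rw [hσa])
    _ = Multiset.map (fun j => fZ j (a (σ⁻¹ j))) (Multiset.map σ Finset.univ.val) := by
          rw [Multiset.map_univ_val_equiv]
    _ = Multiset.map ((fun j => fZ j (a (σ⁻¹ j))) ∘ σ) Finset.univ.val :=
          Multiset.map_map _ _ _
    _ = Multiset.map (fun j => MulAut.conj (φP σ) (fZ j (a j))) Finset.univ.val := by
          apply Multiset.map_congr rfl
          intro j _
          show fZ (σ j) (a (σ⁻¹ (σ j))) = _
          rw [hterm, Equiv.Perm.inv_def, Equiv.symm_apply_apply]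
  unfold Finset.noncommProd
  congr 1

/-- the group homomorphism `W 2 d →* (A d)ˣ` -/
noncomputable def φW : W 2 d →* (A d)ˣ :=
  SemidirectProduct.lift φN φP compat

/-- the algebra homomorphism -/
noncomputable def Psi : MonoidAlgebra ℂ (W 2 d) →ₐ[ℂ] A d :=
  MonoidAlgebra.lift ℂ (A d) (W 2 d) ((Units.coeHom (A d)).comp φW)

lemma Psi_single (g : W 2 d) :
    Psi (MonoidAlgebra.single g (1 : ℂ)) = ((φW g : (A d)ˣ) : A d) := by
  rw [Psi, MonoidAlgebra.lift_single, one_smul]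
  rfl

lemma Psi_prop1 (σ : Equiv.Perm (Fin d)) :
    Psi (MonoidAlgebra.single (⟨1, σ⟩ : W 2 d) 1) =
      MonoidAlgebra.single σ.toPEquiv 1 := by
  have h : (⟨1, σ⟩ : W 2 d) = SemidirectProduct.inr σ := rfl
  refine (Psi_single (d := d) (SemidirectProduct.inr σ)).trans ?_
  have hl : φW (d := d) (SemidirectProduct.inr σ) = φP σ :=
    SemidirectProduct.lift_inr _ _ _ _
  rw [hl]
  exact φP_coe σ

lemma Psi_prop2 :
    Psi (MonoidAlgebra.single (Lemma15.s₀ d) 1) =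
      2 • MonoidAlgebra.single (eps1 d) (1 : ℂ) - MonoidAlgebra.single 1 1 := by
  have h : (Lemma15.s₀ d) = (SemidirectProduct.inl
      (Pi.mulSingle 0 (Multiplicative.ofAdd (1 : ZMod 2))) : W 2 d) := rfl
  rw [Psi_single, h]
  have hl : φW (d := d) ((SemidirectProduct.inl
      (Pi.mulSingle 0 (Multiplicative.ofAdd (1 : ZMod 2))) : W 2 d)) =
      φN (Pi.mulSingle 0 (Multiplicative.ofAdd (1 : ZMod 2))) :=
    SemidirectProduct.lift_inl _ _ _ _
  rw [hl, φN, MonoidHom.noncommPiCoprod_mulSingle]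
  show ((u (0 : Fin d) ^ (Multiplicative.toAdd (Multiplicative.ofAdd (1 : ZMod 2))).val :
    (A d)ˣ) : A d) = _
  have hval : (Multiplicative.toAdd (Multiplicative.ofAdd (1 : ZMod 2))).val = 1 := rfl
  rw [hval, pow_one, u_coe, tEps, eps1_eq_epsAt, MonoidAlgebra.one_def]

end Lemma15

/-- **Lemma 15.** There is a unique ℂ-algebra homomorphism
`Ψ : ℂ[W(2,d)] → ℂ[IS_d]` with `Ψ(1,σ) = σ` (as a total partial bijection) for every
permutation `σ` and `Ψ(s₀) = 2ε₁ − e`; moreover, `Ψ` is surjective. -/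
theorem exists_unique_epi_to_rook (d : ℕ) [NeZero d] (hd : 2 ≤ d) :
    (∃! Ψ : MonoidAlgebra ℂ (W 2 d) →ₐ[ℂ] MonoidAlgebra ℂ (PEquiv (Fin d) (Fin d)),
      (∀ σ : Equiv.Perm (Fin d),
        Ψ (MonoidAlgebra.single (⟨1, σ⟩ : W 2 d) 1) =
          MonoidAlgebra.single σ.toPEquiv 1) ∧
      Ψ (MonoidAlgebra.single
          (⟨Pi.mulSingle 0 (Multiplicative.ofAdd (1 : ZMod 2)), 1⟩ : W 2 d) 1) =
        2 • MonoidAlgebra.single (eps1 d) (1 : ℂ) - MonoidAlgebra.single 1 1) ∧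
    (∀ Ψ : MonoidAlgebra ℂ (W 2 d) →ₐ[ℂ] MonoidAlgebra ℂ (PEquiv (Fin d) (Fin d)),
      ((∀ σ : Equiv.Perm (Fin d),
        Ψ (MonoidAlgebra.single (⟨1, σ⟩ : W 2 d) 1) =
          MonoidAlgebra.single σ.toPEquiv 1) ∧
      Ψ (MonoidAlgebra.single
          (⟨Pi.mulSingle 0 (Multiplicative.ofAdd (1 : ZMod 2)), 1⟩ : W 2 d) 1) =
        2 • MonoidAlgebra.single (eps1 d) (1 : ℂ) - MonoidAlgebra.single 1 1) →
      Function.Surjective Ψ) := by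
  classical
  -- uniqueness: two homs with the property agree
  have huniq : ∀ Ψ₁ Ψ₂ : MonoidAlgebra ℂ (W 2 d) →ₐ[ℂ] MonoidAlgebra ℂ (PEquiv (Fin d) (Fin d)),
      ((∀ σ : Equiv.Perm (Fin d),
        Ψ₁ (MonoidAlgebra.single (⟨1, σ⟩ : W 2 d) 1) = MonoidAlgebra.single σ.toPEquiv 1) ∧
        Ψ₁ (MonoidAlgebra.single (Lemma15.s₀ d) 1) =
          2 • MonoidAlgebra.single (eps1 d) (1 : ℂ) - MonoidAlgebra.single 1 1) →
      ((∀ σ : Equiv.Perm (Fin d),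
        Ψ₂ (MonoidAlgebra.single (⟨1, σ⟩ : W 2 d) 1) = MonoidAlgebra.single σ.toPEquiv 1) ∧
        Ψ₂ (MonoidAlgebra.single (Lemma15.s₀ d) 1) =
          2 • MonoidAlgebra.single (eps1 d) (1 : ℂ) - MonoidAlgebra.single 1 1) →
      Ψ₁ = Ψ₂ := by
    intro Ψ₁ Ψ₂ ⟨h1, h2⟩ ⟨h1', h2'⟩
    apply MonoidAlgebra.algHom_ext ?_ (Subsingleton.elim _ _)
    intro g
    have hg := Lemma15.mem_closure_W g
    induction hg using Submonoid.closure_induction with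
    | mem x hx =>
      rcases hx with ⟨σ, rfl⟩ | hx
      · rw [h1, h1']
      · obtain rfl : x = Lemma15.s₀ d := hx
        rw [h2, h2']
    | one =>
      rw [← MonoidAlgebra.one_def, map_one, map_one]
    | mul x y _ _ hx hy =>
      have : MonoidAlgebra.single (x * y) (1 : ℂ) =
          MonoidAlgebra.single x 1 * MonoidAlgebra.single y 1 := by
        rw [MonoidAlgebra.single_mul_single, one_mul]
      erw [this, map_mul, map_mul, hx, hy]
  -- surjectivity
  have hsurj : ∀ Ψ : MonoidAlgebra ℂ (W 2 d) →ₐ[ℂ] MonoidAlgebra ℂ (PEquiv (Fin d) (Fin d)),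
      ((∀ σ : Equiv.Perm (Fin d),
        Ψ (MonoidAlgebra.single (⟨1, σ⟩ : W 2 d) 1) = MonoidAlgebra.single σ.toPEquiv 1) ∧
        Ψ (MonoidAlgebra.single (Lemma15.s₀ d) 1) =
          2 • MonoidAlgebra.single (eps1 d) (1 : ℂ) - MonoidAlgebra.single 1 1) →
      Function.Surjective Ψ := by
    intro Ψ ⟨h1, h2⟩
    have hone : (MonoidAlgebra.single (1 : PEquiv (Fin d) (Fin d)) (1 : ℂ)) ∈ Ψ.range := by
      rw [← MonoidAlgebra.one_def]
      exact Subalgebra.one_mem _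
    have heps : MonoidAlgebra.single (eps1 d) (1 : ℂ) ∈ Ψ.range := by
      have hmem : (2 • MonoidAlgebra.single (eps1 d) (1 : ℂ) - MonoidAlgebra.single 1 1)
          ∈ Ψ.range := ⟨_, h2⟩
      have : MonoidAlgebra.single (eps1 d) (1 : ℂ) = (2 : ℂ)⁻¹ •
          ((2 • MonoidAlgebra.single (eps1 d) (1 : ℂ) - MonoidAlgebra.single 1 1) +
            MonoidAlgebra.single 1 1) := by
        rw [sub_add_cancel, two_smul, smul_add, ← add_smul]
        norm_num
      rw [this]
      exact Subalgebra.smul_mem _ (Subalgebra.add_mem _ hmem hone) _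
    have hsingle : ∀ m : PEquiv (Fin d) (Fin d),
        MonoidAlgebra.single m (1 : ℂ) ∈ Ψ.range := by
      intro m
      have hm := Lemma15.mem_closure_rook m
      induction hm using Submonoid.closure_induction with
      | mem x hx =>
        rcases hx with ⟨σ, rfl⟩ | ⟨j, rfl⟩
        · exact ⟨_, h1 σ⟩
        · -- epsAt j = swap-conjugate of eps1
          have hconj : Lemma15.epsAt j =
              (Equiv.swap (0 : Fin d) j).toPEquiv * eps1 d *
                (Equiv.swap (0 : Fin d) j).toPEquiv := by
            have := Lemma15.toPEquiv_conj_epsAt (Equiv.swap (0 : Fin d) j) 0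
            rw [Equiv.swap_inv] at this
            rw [Lemma15.eps1_eq_epsAt, this, Equiv.swap_apply_left]
          have hswap : MonoidAlgebra.single
              ((Equiv.swap (0 : Fin d) j).toPEquiv) (1 : ℂ) ∈ Ψ.range := ⟨_, h1 _⟩
          rw [hconj, ← Lemma15.single_mul_single', ← Lemma15.single_mul_single']
          exact Subalgebra.mul_mem _ (Subalgebra.mul_mem _ hswap heps) hswap
      | one => exact hone
      | mul x y _ _ hx hy =>
        rw [← Lemma15.single_mul_single']
        exact Subalgebra.mul_mem _ hx hy
    have hall : ∀ y : MonoidAlgebra ℂ (PEquiv (Fin d) (Fin d)), y ∈ Ψ.range := by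
      intro y
      induction y using MonoidAlgebra.induction with
      | zero => exact Subalgebra.zero_mem _
      | single_add a b f _ _ ih =>
        refine Subalgebra.add_mem _ ?_ ih
        have : (MonoidAlgebra.single a b : MonoidAlgebra ℂ (PEquiv (Fin d) (Fin d))) =
            b • MonoidAlgebra.single a 1 := by
          rw [MonoidAlgebra.smul_single', mul_one]
        rw [this]
        exact Subalgebra.smul_mem _ (hsingle a) b
    intro y
    exact (AlgHom.mem_range Ψ).mp (hall y)
  refine ⟨⟨Lemma15.Psi, ⟨Lemma15.Psi_prop1, Lemma15.Psi_prop2⟩, ?_⟩, hsurj⟩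
  intro Ψ hΨ
  exact huniq Ψ Lemma15.Psi hΨ ⟨Lemma15.Psi_prop1, Lemma15.Psi_prop2⟩
end

section
/- Let d ≥ 1 and let A and B be finite abelian (commutative) groups with card A = card B. Then the group algebras MonoidAlgebra ℂ ((Fin d → A) ⋊ Equiv.Perm (Fin d)) and MonoidAlgebra ℂ ((Fin d → B) ⋊ Equiv.Perm (Fin d)) are isomorphic as ℂ-algebras, where in both semidirect products a permutation σ acts on a tuple a by (σ • a) j = a (σ⁻¹ j). (Subsection 3.8: ℂ[A ≀ S_d] ≅ ℂ[C_ℓ ≀ S_d] for any abelian group A with ℓ elements.) -/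
/-- The action of permutations of `Fin d` on tuples `Fin d → G`,
given by `(σ • a) j = a (σ⁻¹ j)`. -/
def permMulAutG (d : ℕ) (G : Type) [Group G] :
    Equiv.Perm (Fin d) →* MulAut (Fin d → G) where
  toFun σ :=
    { toFun := fun a j => a (σ⁻¹ j)
      invFun := fun a j => a (σ j)
      left_inv := fun a => by funext j; simp
      right_inv := fun a => by funext j; simp
      map_mul' := fun a b => rfl }
  map_one' := by ext a j; simp
  map_mul' := fun σ τ => by ext a j; simp

noncomputable section Aux

open MonoidAlgebra Finsupp Function

/-! ### Skew group algebra transfer -/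

section Skew

variable {H N₁ N₂ : Type} [Group H] [Group N₁] [Group N₂]
  (φ₁ : H →* MulAut N₁) (φ₂ : H →* MulAut N₂)

/-- Embedding of the base group algebra. -/
abbrev wInl : MonoidAlgebra ℂ N₁ →ₐ[ℂ] MonoidAlgebra ℂ (SemidirectProduct N₁ H φ₁) :=
  MonoidAlgebra.mapDomainAlgHom ℂ ℂ (SemidirectProduct.inl (φ := φ₁))

lemma wInl_single (n : N₁) (c : ℂ) :
    wInl φ₁ (MonoidAlgebra.single n c) = MonoidAlgebra.single (SemidirectProduct.inl n) c := by
  simp [wInl, MonoidAlgebra.mapDomainAlgHom]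

lemma inr_mul_wInl (h : H) (x : MonoidAlgebra ℂ N₁) :
    MonoidAlgebra.single (SemidirectProduct.inr h : SemidirectProduct N₁ H φ₁) 1 * wInl φ₁ x
      = wInl φ₁ (MonoidAlgebra.domCongr ℂ ℂ (φ₁ h) x)
        * MonoidAlgebra.single (SemidirectProduct.inr h) 1 := by
  induction x using MonoidAlgebra.induction_linear with
  | zero => simp
  | add f g hf hg =>
      rw [map_add, map_add, map_add, mul_add, add_mul, hf, hg]
  | single a b =>
      rw [wInl_single, MonoidAlgebra.domCongr_single, wInl_single,
        MonoidAlgebra.single_mul_single, MonoidAlgebra.single_mul_single,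
        one_mul, mul_one]
      congr 1
      rw [SemidirectProduct.inl_aut]
      simp [mul_assoc]

variable {φ₁ φ₂}

/-- The algebra morphism between skew group algebras induced by an equivariant
morphism of the base group algebras. -/
def skewHom (F : MonoidAlgebra ℂ N₁ →ₐ[ℂ] MonoidAlgebra ℂ N₂)
    (hF : ∀ (h : H) (x), F (MonoidAlgebra.domCongr ℂ ℂ (φ₁ h) x)
      = MonoidAlgebra.domCongr ℂ ℂ (φ₂ h) (F x)) :
    MonoidAlgebra ℂ (SemidirectProduct N₁ H φ₁) →ₐ[ℂ]
      MonoidAlgebra ℂ (SemidirectProduct N₂ H φ₂) :=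
  MonoidAlgebra.lift ℂ _ _
    { toFun := fun g => wInl φ₂ (F (MonoidAlgebra.single g.left 1))
        * MonoidAlgebra.single (SemidirectProduct.inr g.right) 1
      map_one' := by
        simp [← MonoidAlgebra.one_def]
      map_mul' := fun g₁ g₂ => by
        rw [SemidirectProduct.mul_left, SemidirectProduct.mul_right]
        have e1 : MonoidAlgebra.single (g₁.left * (φ₁ g₁.right) g₂.left : N₁) (1 : ℂ)
            = MonoidAlgebra.single g₁.left 1
              * MonoidAlgebra.domCongr ℂ ℂ (φ₁ g₁.right) (MonoidAlgebra.single g₂.left 1) := by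
          rw [MonoidAlgebra.domCongr_single, MonoidAlgebra.single_mul_single, mul_one]
        rw [e1, map_mul, hF, mul_assoc]
        rw [show MonoidAlgebra.single (SemidirectProduct.inr g₁.right : SemidirectProduct N₂ H φ₂) 1
              * (wInl φ₂ (F (MonoidAlgebra.single g₂.left 1))
                * MonoidAlgebra.single (SemidirectProduct.inr g₂.right) 1)
            = (MonoidAlgebra.single (SemidirectProduct.inr g₁.right) 1
                * wInl φ₂ (F (MonoidAlgebra.single g₂.left 1)))
                * MonoidAlgebra.single (SemidirectProduct.inr g₂.right) 1 from (mul_assoc _ _ _).symm]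
        rw [inr_mul_wInl]
        simp [map_mul, MonoidAlgebra.single_mul_single, mul_assoc] }

lemma skewHom_single (F : MonoidAlgebra ℂ N₁ →ₐ[ℂ] MonoidAlgebra ℂ N₂)
    (hF : ∀ (h : H) (x), F (MonoidAlgebra.domCongr ℂ ℂ (φ₁ h) x)
      = MonoidAlgebra.domCongr ℂ ℂ (φ₂ h) (F x))
    (g : SemidirectProduct N₁ H φ₁) :
    skewHom F hF (MonoidAlgebra.single g 1)
      = wInl φ₂ (F (MonoidAlgebra.single g.left 1))
        * MonoidAlgebra.single (SemidirectProduct.inr g.right) 1 := by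
  simp [skewHom, MonoidAlgebra.lift_single]

lemma skewHom_wInl (F : MonoidAlgebra ℂ N₁ →ₐ[ℂ] MonoidAlgebra ℂ N₂)
    (hF : ∀ (h : H) (x), F (MonoidAlgebra.domCongr ℂ ℂ (φ₁ h) x)
      = MonoidAlgebra.domCongr ℂ ℂ (φ₂ h) (F x))
    (x : MonoidAlgebra ℂ N₁) :
    skewHom F hF (wInl φ₁ x) = wInl φ₂ (F x) := by
  induction x using MonoidAlgebra.induction_linear with
  | zero => simp
  | add f g hf hg => rw [map_add, map_add, map_add, map_add, hf, hg]
  | single a b =>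
      have hb : (MonoidAlgebra.single a b : MonoidAlgebra ℂ N₁) = b • MonoidAlgebra.single a 1 := by
        rw [MonoidAlgebra.smul_single', mul_one]
      rw [hb, map_smul, map_smul, map_smul, map_smul, wInl_single, skewHom_single]
      simp [← MonoidAlgebra.one_def]

lemma skewHom_inr (F : MonoidAlgebra ℂ N₁ →ₐ[ℂ] MonoidAlgebra ℂ N₂)
    (hF : ∀ (h : H) (x), F (MonoidAlgebra.domCongr ℂ ℂ (φ₁ h) x)
      = MonoidAlgebra.domCongr ℂ ℂ (φ₂ h) (F x)) (h : H) :
    skewHom F hF (MonoidAlgebra.single (SemidirectProduct.inr h : SemidirectProduct N₁ H φ₁) 1)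
      = MonoidAlgebra.single (SemidirectProduct.inr h : SemidirectProduct N₂ H φ₂) 1 := by
  rw [skewHom_single]
  simp [← MonoidAlgebra.one_def]

/-- Equivariant algebra equivalence of base group algebras induces an equivalence
of skew group algebras. -/
def skewEquiv (F : MonoidAlgebra ℂ N₁ ≃ₐ[ℂ] MonoidAlgebra ℂ N₂)
    (hF : ∀ (h : H) (x), F (MonoidAlgebra.domCongr ℂ ℂ (φ₁ h) x)
      = MonoidAlgebra.domCongr ℂ ℂ (φ₂ h) (F x)) :
    MonoidAlgebra ℂ (SemidirectProduct N₁ H φ₁) ≃ₐ[ℂ]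
      MonoidAlgebra ℂ (SemidirectProduct N₂ H φ₂) := by
  have hF' : ∀ (h : H) (x), F.symm (MonoidAlgebra.domCongr ℂ ℂ (φ₂ h) x)
      = MonoidAlgebra.domCongr ℂ ℂ (φ₁ h) (F.symm x) := by
    intro h x
    have := hF h (F.symm x)
    rw [F.apply_symm_apply] at this
    rw [← this, F.symm_apply_apply]
  have hF₀ : ∀ (h : H) (x), F.toAlgHom (MonoidAlgebra.domCongr ℂ ℂ (φ₁ h) x)
      = MonoidAlgebra.domCongr ℂ ℂ (φ₂ h) (F.toAlgHom x) := hF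
  have hF₀' : ∀ (h : H) (x), F.symm.toAlgHom (MonoidAlgebra.domCongr ℂ ℂ (φ₂ h) x)
      = MonoidAlgebra.domCongr ℂ ℂ (φ₁ h) (F.symm.toAlgHom x) := hF'
  refine AlgEquiv.ofAlgHom (skewHom F.toAlgHom hF₀) (skewHom F.symm.toAlgHom hF₀') ?_ ?_
  · refine MonoidAlgebra.algHom_ext ?_ (Subsingleton.elim _ _)
    intro g
    rw [AlgHom.comp_apply, AlgHom.id_apply, skewHom_single, map_mul, skewHom_wInl, skewHom_inr]
    show wInl φ₂ (F (F.symm (MonoidAlgebra.single g.left 1))) * _ = _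
    rw [F.apply_symm_apply, wInl_single, MonoidAlgebra.single_mul_single, one_mul,
      SemidirectProduct.inl_left_mul_inr_right]
  · refine MonoidAlgebra.algHom_ext ?_ (Subsingleton.elim _ _)
    intro g
    rw [AlgHom.comp_apply, AlgHom.id_apply, skewHom_single, map_mul, skewHom_wInl, skewHom_inr]
    show wInl φ₁ (F.symm (F (MonoidAlgebra.single g.left 1))) * _ = _
    rw [F.symm_apply_apply, wInl_single, MonoidAlgebra.single_mul_single, one_mul,
      SemidirectProduct.inl_left_mul_inr_right]

end Skew

/-! ### Fourier transform for the group algebra of a finite abelian group -/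

section Fourier

variable (d : ℕ) (G : Type) [CommGroup G] [Fintype G]

/-- Evaluation of characters. -/
def wEv : (Fin d → G) →* (AddChar (Additive (Fin d → G)) ℂ → ℂ) where
  toFun a := fun ψ => ψ (Additive.ofMul a)
  map_one' := funext fun ψ => by simpa using ψ.map_zero_eq_one
  map_mul' a b := funext fun ψ => by
    rw [ofMul_mul]; exact ψ.map_add_eq_mul _ _

/-- The Fourier transform as an algebra morphism. -/
def wFourier : MonoidAlgebra ℂ (Fin d → G) →ₐ[ℂ]
    (AddChar (Additive (Fin d → G)) ℂ → ℂ) :=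
  MonoidAlgebra.lift ℂ _ _ (wEv d G)

lemma wFourier_single (a : Fin d → G) (c : ℂ) :
    wFourier d G (MonoidAlgebra.single a c) = c • wEv d G a :=
  MonoidAlgebra.lift_single _ _ _

lemma wFourier_injective : Function.Injective (wFourier d G) := by
  have hli : LinearIndependent ℂ (fun a : Fin d → G => (wEv d G a : _ → ℂ)) := by
    have h1 := AddChar.linearIndependent (AddChar (Additive (Fin d → G)) ℂ) ℂ
    have h2 : Function.Injective (fun a : Fin d → G =>
        (AddChar.doubleDualEmb (Additive.ofMul a) :
          AddChar (AddChar (Additive (Fin d → G)) ℂ) ℂ)) :=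
      AddChar.doubleDualEmb_injective.comp (fun x y hxy => by simpa using hxy)
    have h3 : (fun a : Fin d → G => (wEv d G a : _ → ℂ))
        = (fun χ : AddChar (AddChar (Additive (Fin d → G)) ℂ) ℂ => ⇑χ)
          ∘ (fun a : Fin d → G => AddChar.doubleDualEmb (Additive.ofMul a)) := rfl
    rw [h3]
    exact h1.comp _ h2
  have key : ⇑(wFourier d G) = ⇑(Finsupp.linearCombination ℂ (fun a : Fin d → G => (wEv d G a : _ → ℂ))) ∘ MonoidAlgebra.coeff := by
    funext x
    rw [wFourier, MonoidAlgebra.lift_apply, Function.comp_apply, Finsupp.linearCombination_apply]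
  rw [key]
  exact Function.Injective.comp hli MonoidAlgebra.coeff_injective

lemma wFourier_bijective : Function.Bijective (wFourier d G) := by
  refine ⟨wFourier_injective d G, ?_⟩
  haveI : Module.Finite ℂ (MonoidAlgebra ℂ (Fin d → G)) :=
    Module.Finite.of_basis (MonoidAlgebra.basis (Fin d → G) ℂ :
      Module.Basis (Fin d → G) ℂ (MonoidAlgebra ℂ (Fin d → G)))
  have hrank : Module.finrank ℂ (MonoidAlgebra ℂ (Fin d → G))
      = Module.finrank ℂ (AddChar (Additive (Fin d → G)) ℂ → ℂ) := by
    rw [Module.finrank_fintype_fun_eq_card, AddChar.card_eq]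
    rw [show Module.finrank ℂ (MonoidAlgebra ℂ (Fin d → G)) = Fintype.card (Fin d → G) from
      Module.finrank_eq_card_basis (MonoidAlgebra.basis (Fin d → G) ℂ :
        Module.Basis (Fin d → G) ℂ (MonoidAlgebra ℂ (Fin d → G)))]
    exact Fintype.card_congr Additive.ofMul
  have hsurj := (LinearMap.injective_iff_surjective_of_finrank_eq_finrank
      (f := (wFourier d G).toLinearMap) hrank).mp
    (wFourier_injective d G)
  exact hsurj

/-- The Fourier transform as an algebra isomorphism. -/
def wFourierEquiv : MonoidAlgebra ℂ (Fin d → G) ≃ₐ[ℂ]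
    (AddChar (Additive (Fin d → G)) ℂ → ℂ) :=
  AlgEquiv.ofBijective (wFourier d G) (wFourier_bijective d G)

lemma wFourierEquiv_coe : ⇑(wFourierEquiv d G) = ⇑(wFourier d G) := rfl

/-- The action of a permutation on characters, by precomposition. -/
def wDualMap (σ : Equiv.Perm (Fin d)) :
    AddChar (Additive (Fin d → G)) ℂ → AddChar (Additive (Fin d → G)) ℂ :=
  fun ψ => ψ.compAddMonoidHom
    (MonoidHom.toAdditive ((permMulAutG d G σ).toMonoidHom))

lemma wDualMap_apply (σ : Equiv.Perm (Fin d)) (ψ : AddChar (Additive (Fin d → G)) ℂ)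
    (a : Fin d → G) :
    wDualMap d G σ ψ (Additive.ofMul a) = ψ (Additive.ofMul (permMulAutG d G σ a)) := rfl

lemma wFourier_equivariant (σ : Equiv.Perm (Fin d)) (x : MonoidAlgebra ℂ (Fin d → G)) :
    wFourier d G ((MonoidAlgebra.domCongr ℂ ℂ ((permMulAutG d G σ) : (Fin d → G) ≃* (Fin d → G))) x)
      = (wFourier d G x) ∘ (wDualMap d G σ) := by
  have key : ((Pi.algHom ℂ _ (fun ψ => (Pi.evalAlgHom ℂ (fun _ => ℂ) (wDualMap d G σ ψ))) :
        (AddChar (Additive (Fin d → G)) ℂ → ℂ) →ₐ[ℂ] _).comp (wFourier d G))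
      = (wFourier d G).comp
        ((MonoidAlgebra.domCongr ℂ ℂ ((permMulAutG d G σ) : (Fin d → G) ≃* (Fin d → G))).toAlgHom) := by
    refine MonoidAlgebra.algHom_ext ?_ (Subsingleton.elim _ _)
    intro a
    funext ψ
    show wFourier d G (MonoidAlgebra.single a 1) (wDualMap d G σ ψ)
      = wFourier d G (MonoidAlgebra.domCongr ℂ ℂ _ (MonoidAlgebra.single a 1)) ψ
    rw [MonoidAlgebra.domCongr_single, wFourier_single, wFourier_single]
    simp only [one_smul]
    rfl
  exact (AlgHom.congr_fun key x).symm

end Fourier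

/-! ### Decomposition of characters of a product into factors -/

section Factors

lemma addChar_map_sum {ι M R : Type*} [AddCommMonoid M] [CommMonoid R] (ψ : AddChar M R)
    (s : Finset ι) (f : ι → M) : ψ (∑ i ∈ s, f i) = ∏ i ∈ s, ψ (f i) := by
  classical
  induction s using Finset.cons_induction with
  | empty => simpa using ψ.map_zero_eq_one
  | cons a s ha ih => rw [Finset.sum_cons, Finset.prod_cons, ψ.map_add_eq_mul, ih]

variable (d : ℕ) (G : Type) [CommGroup G] [Fintype G]

/-- Restricting a character of the product to a single coordinate. -/
def wToFactors : AddChar (Additive (Fin d → G)) ℂ → (Fin d → AddChar (Additive G) ℂ) :=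
  fun ψ i => ψ.compAddMonoidHom
    (MonoidHom.toAdditive (MonoidHom.mulSingle (fun _ : Fin d => G) i))

/-- Assembling characters of the factors into a character of the product. -/
def wOfFactors : (Fin d → AddChar (Additive G) ℂ) → AddChar (Additive (Fin d → G)) ℂ :=
  fun χ =>
  { toFun := fun a => ∏ i, χ i (Additive.ofMul (Additive.toMul a i))
    map_zero_eq_one' := by simp
    map_add_eq_mul' := fun a b => by
      show (∏ i, χ i (Additive.ofMul (Additive.toMul (a + b) i))) = _
      rw [← Finset.prod_mul_distrib]
      exact Finset.prod_congr rfl fun i _ => by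
        rw [← AddChar.map_add_eq_mul, ← ofMul_mul]; rfl }

/-- Characters of a finite product decompose into tuples of characters. -/
def wFactorsEquiv : AddChar (Additive (Fin d → G)) ℂ ≃ (Fin d → AddChar (Additive G) ℂ) where
  toFun := wToFactors d G
  invFun := wOfFactors d G
  left_inv := fun ψ => by
    ext a
    show (∏ i, ψ (Additive.ofMul (Pi.mulSingle i (Additive.toMul a i)))) = ψ a
    rw [← addChar_map_sum]
    congr 1
    have key : ∀ (s : Finset (Fin d)) (f : Fin d → (Fin d → G)),
        (∑ i ∈ s, Additive.ofMul (f i)) = Additive.ofMul (∏ i ∈ s, f i) := by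
      intro s f
      induction s using Finset.cons_induction with
      | empty => simp
      | cons x s hx ih => rw [Finset.sum_cons, Finset.prod_cons, ofMul_mul, ih]
    refine (key Finset.univ _).trans ?_
    rw [Finset.univ_prod_mulSingle]
    rfl
  right_inv := fun χ => by
    funext i
    ext a
    show (∏ j, χ j (Additive.ofMul (Pi.mulSingle (M := fun _ : Fin d => G) i (Additive.toMul a) j))) = χ i a
    refine (Fintype.prod_eq_single i fun j hj => ?_).trans ?_
    · rw [Pi.mulSingle_eq_of_ne hj]
      simpa using (χ j).map_zero_eq_one
    · rw [Pi.mulSingle_eq_same]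
      simp

lemma permMulAutG_mulSingle (σ : Equiv.Perm (Fin d)) (i : Fin d) (x : G) :
    permMulAutG d G σ (Pi.mulSingle i x) = Pi.mulSingle (σ i) x := by
  funext j
  show Pi.mulSingle (M := fun _ : Fin d => G) i x (σ⁻¹ j)
    = Pi.mulSingle (M := fun _ : Fin d => G) (σ i) x j
  classical
  simp [Pi.mulSingle_apply, Equiv.Perm.inv_eq_iff_eq, Equiv.symm_apply_eq]

lemma wToFactors_equivariant (σ : Equiv.Perm (Fin d)) (ψ : AddChar (Additive (Fin d → G)) ℂ) :
    wToFactors d G (wDualMap d G σ ψ) = (wToFactors d G ψ) ∘ σ := by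
  funext i
  ext a
  show ψ (Additive.ofMul (permMulAutG d G σ
      (Pi.mulSingle (M := fun _ : Fin d => G) i (Additive.toMul a))))
    = ψ (Additive.ofMul (Pi.mulSingle (M := fun _ : Fin d => G) (σ i) (Additive.toMul a)))
  rw [permMulAutG_mulSingle]

end Factors

/-! ### The equivariant base equivalence and the final assembly -/

section Transfer

/-- Precomposition as an algebra equivalence of function algebras. -/
def wPrecompAlgEquiv {X Y : Type} (e : X ≃ Y) : (Y → ℂ) ≃ₐ[ℂ] (X → ℂ) where
  toFun f := f ∘ e
  invFun f := f ∘ e.symm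
  left_inv f := by funext y; simp
  right_inv f := by funext x; simp
  map_mul' _ _ := rfl
  map_add' _ _ := rfl
  commutes' _ := rfl

variable (d : ℕ) (A B : Type) [CommGroup A] [CommGroup B] [Fintype A] [Fintype B]
  (h : Fintype.card A = Fintype.card B)

/-- Any bijection between the duals of the factors, available since the cardinalities agree. -/
def wCharEquiv : AddChar (Additive A) ℂ ≃ AddChar (Additive B) ℂ :=
  Fintype.equivOfCardEq (by
    rw [AddChar.card_eq, AddChar.card_eq]
    exact (Fintype.card_congr Additive.toMul).trans
      (h.trans (Fintype.card_congr Additive.toMul).symm))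

/-- The induced equivariant bijection between the duals of the tuple groups. -/
def wDualEquiv : AddChar (Additive (Fin d → A)) ℂ ≃ AddChar (Additive (Fin d → B)) ℂ :=
  (wFactorsEquiv d A).trans ((Equiv.piCongrRight fun _ => wCharEquiv A B h).trans
    (wFactorsEquiv d B).symm)

lemma wDualEquiv_equivariant (σ : Equiv.Perm (Fin d)) (ψ : AddChar (Additive (Fin d → A)) ℂ) :
    wDualEquiv d A B h (wDualMap d A σ ψ) = wDualMap d B σ (wDualEquiv d A B h ψ) := by
  apply (wFactorsEquiv d B).injective
  have key : ∀ ψ', wFactorsEquiv d B (wDualEquiv d A B h ψ')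
      = fun i => wCharEquiv A B h (wFactorsEquiv d A ψ' i) := by
    intro ψ'
    show (wFactorsEquiv d B) ((wFactorsEquiv d B).symm _) = _
    rw [Equiv.apply_symm_apply]
    rfl
  rw [key]
  rw [show (wFactorsEquiv d B) (wDualMap d B σ (wDualEquiv d A B h ψ))
      = (wFactorsEquiv d B (wDualEquiv d A B h ψ)) ∘ σ from
    wToFactors_equivariant d B σ _]
  rw [key]
  funext i
  show wCharEquiv A B h ((wFactorsEquiv d A) (wDualMap d A σ ψ) i) = _
  rw [show (wFactorsEquiv d A) (wDualMap d A σ ψ) = (wFactorsEquiv d A ψ) ∘ σ from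
    wToFactors_equivariant d A σ ψ]
  rfl

/-- The equivariant algebra equivalence between the group algebras of the tuple groups. -/
def wBaseEquiv : MonoidAlgebra ℂ (Fin d → A) ≃ₐ[ℂ] MonoidAlgebra ℂ (Fin d → B) :=
  ((wFourierEquiv d A).trans (wPrecompAlgEquiv (wDualEquiv d A B h).symm)).trans
    (wFourierEquiv d B).symm

lemma wBaseEquiv_equivariant (σ : Equiv.Perm (Fin d)) (x : MonoidAlgebra ℂ (Fin d → A)) :
    wBaseEquiv d A B h (MonoidAlgebra.domCongr ℂ ℂ (permMulAutG d A σ) x)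
      = MonoidAlgebra.domCongr ℂ ℂ (permMulAutG d B σ) (wBaseEquiv d A B h x) := by
  have hdual : (wDualMap d A σ) ∘ ⇑(wDualEquiv d A B h).symm
      = ⇑(wDualEquiv d A B h).symm ∘ (wDualMap d B σ) := by
    funext η
    apply (wDualEquiv d A B h).injective
    simp only [Function.comp_apply]
    rw [wDualEquiv_equivariant, Equiv.apply_symm_apply, Equiv.apply_symm_apply]
  have hAeq : (wFourierEquiv d A) ((MonoidAlgebra.domCongr ℂ ℂ (permMulAutG d A σ)) x)
      = ((wFourierEquiv d A) x) ∘ (wDualMap d A σ) := wFourier_equivariant d A σ x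
  have hBsymm : ∀ y : MonoidAlgebra ℂ (Fin d → B),
      (MonoidAlgebra.domCongr ℂ ℂ (permMulAutG d B σ)) y
        = (wFourierEquiv d B).symm (((wFourierEquiv d B) y) ∘ wDualMap d B σ) := by
    intro y
    apply (wFourierEquiv d B).injective
    rw [AlgEquiv.apply_symm_apply]
    exact wFourier_equivariant d B σ y
  calc wBaseEquiv d A B h (MonoidAlgebra.domCongr ℂ ℂ (permMulAutG d A σ) x)
      = (wFourierEquiv d B).symm
          (((wFourierEquiv d A) ((MonoidAlgebra.domCongr ℂ ℂ (permMulAutG d A σ)) x))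
            ∘ ⇑(wDualEquiv d A B h).symm) := rfl
    _ = (wFourierEquiv d B).symm
          ((((wFourierEquiv d A) x) ∘ (wDualMap d A σ)) ∘ ⇑(wDualEquiv d A B h).symm) := by
          rw [hAeq]
    _ = (wFourierEquiv d B).symm
          ((((wFourierEquiv d A) x) ∘ ⇑(wDualEquiv d A B h).symm) ∘ (wDualMap d B σ)) := by
          rw [Function.comp_assoc, hdual, ← Function.comp_assoc]
    _ = MonoidAlgebra.domCongr ℂ ℂ (permMulAutG d B σ) ((wFourierEquiv d B).symm
          (((wFourierEquiv d A) x) ∘ ⇑(wDualEquiv d A B h).symm)) := by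
          rw [hBsymm ((wFourierEquiv d B).symm
            (((wFourierEquiv d A) x) ∘ ⇑(wDualEquiv d A B h).symm)),
            AlgEquiv.apply_symm_apply]
    _ = MonoidAlgebra.domCongr ℂ ℂ (permMulAutG d B σ) (wBaseEquiv d A B h x) := rfl

end Transfer

end Aux

/-- **Subsection 3.8.** For any two finite abelian groups `A`, `B` of the same order,
the group algebras `ℂ[A ≀ S_d]` and `ℂ[B ≀ S_d]` are isomorphic as ℂ-algebras. -/
theorem wreath_group_algebra_iso_of_card_eq (d : ℕ) (hd : 1 ≤ d)
    (A B : Type) [CommGroup A] [CommGroup B] [Fintype A] [Fintype B]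
    (h : Fintype.card A = Fintype.card B) :
    Nonempty
      (MonoidAlgebra ℂ
          (SemidirectProduct (Fin d → A) (Equiv.Perm (Fin d)) (permMulAutG d A)) ≃ₐ[ℂ]
        MonoidAlgebra ℂ
          (SemidirectProduct (Fin d → B) (Equiv.Perm (Fin d)) (permMulAutG d B))) := by
  exact ⟨skewEquiv (wBaseEquiv d A B h) (fun σ x => wBaseEquiv_equivariant d A B h σ x)⟩
end

section
/- Let d ≥ 1, ℓ ≥ 1, k ≥ 1 with k ∣ ℓ, and let θ : Fin ℓ ≃ Fin ℓ be the rotation i ↦ i + ℓ/k (addition mod ℓ), an element of order k. Let f : Fin d → Fin ℓ, and set K := {σ ∈ Equiv.Perm (Fin d) | ∃ t : ℕ, θ^t ∘ f ∘ σ = f} and G_f := {σ | f ∘ σ = f}. Let m := card {t : Fin k | ∀ i : Fin ℓ, card (f⁻¹ {i}) = card (f⁻¹ {θ^{t} i})}. Then: K is a subgroup of Perm (Fin d); G_f is a subgroup of K that is normal in K; and there exists a cyclic subgroup C of Perm (Fin d) with C ≤ K, Nat.card C = m, C ⊓ G_f = ⊥, and (C : Set) * (G_f : Set) = (K : Set),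 so that K is the internal semidirect product of G_f by a cyclic group of order m. (Lemma 51: the endomorphism group of an object in the quotient groupoid 𝒢_{(ℓ,d)}^k is H_k^λ ⋉ 𝒢_{(ℓ,d)}(f,f).) -/
open scoped Pointwise
open Fin.NatCast in
/-- The rotation `θ : i ↦ i + ℓ/k` of the set of colors `Fin ℓ`. -/
def colorRot (ℓ k : ℕ) [NeZero ℓ] : Equiv.Perm (Fin ℓ) :=
  Equiv.addRight ((ℓ / k : ℕ) : Fin ℓ)

/-- Auxiliary: the stabilizer of a "type" function `c` inside permutations of colors. -/
def typeStab {ℓ : ℕ} (c : Fin ℓ → ℕ) : Subgroup (Equiv.Perm (Fin ℓ)) where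
  carrier := {π | ∀ i, c i = c (π i)}
  one_mem' := fun _ => rfl
  mul_mem' := by
    intro p q hp hq i
    simpa [Equiv.Perm.mul_apply] using (hq i).trans (hp (q i))
  inv_mem' := by
    intro p hp i
    simpa using (hp (p⁻¹ i)).symm

theorem mem_typeStab {ℓ : ℕ} (c : Fin ℓ → ℕ) (π : Equiv.Perm (Fin ℓ)) :
    π ∈ typeStab c ↔ ∀ i, c i = c (π i) := Iff.rfl

theorem Equiv.Perm.apply_inv_self {α : Type*} (f : Equiv.Perm α) (x : α) : f (f⁻¹ x) = x :=
  Equiv.apply_symm_apply f x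

theorem Equiv.Perm.inv_apply_self {α : Type*} (f : Equiv.Perm α) (x : α) : f⁻¹ (f x) = x :=
  Equiv.symm_apply_apply f x

open Fin.NatCast

/-- **Lemma 51.** Let `θ` be the rotation of colors by `ℓ/k` (an element of order `k`),
`f : Fin d → Fin ℓ`, `K = {σ | θ^t ∘ f ∘ σ = f for some t}` the endomorphism group of
the orbit of `f` in the quotient groupoid `𝒢_{(ℓ,d)}^k`, and `G_f = {σ | f ∘ σ = f}`.
Then `K` is a subgroup of `Perm (Fin d)`, `G_f` is a normal subgroup of `K`, and `K` is
the internal semidirect product of `G_f` by a cyclic group of order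
`m = |H_k^λ| = #{t : Fin k | the type of f is invariant under θ^t}`. -/
theorem quotient_groupoid_vertex_group (ℓ k d : ℕ) [NeZero ℓ]
    (hk : 0 < k) (hd : 1 ≤ d) (hdvd : k ∣ ℓ) (f : Fin d → Fin ℓ) :
    orderOf (colorRot ℓ k) = k ∧
    ∃ K Gf C : Subgroup (Equiv.Perm (Fin d)),
      (K : Set (Equiv.Perm (Fin d))) =
        {σ : Equiv.Perm (Fin d) | ∃ t : ℕ, ⇑((colorRot ℓ k) ^ t) ∘ f ∘ ⇑σ = f} ∧
      (Gf : Set (Equiv.Perm (Fin d))) = {σ : Equiv.Perm (Fin d) | f ∘ ⇑σ = f} ∧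
      Gf ≤ K ∧
      (∀ x ∈ K, ∀ g ∈ Gf, x * g * x⁻¹ ∈ Gf) ∧
      IsCyclic C ∧
      C ≤ K ∧
      Nat.card C =
        Nat.card {t : Fin k // ∀ i : Fin ℓ,
          Nat.card {x : Fin d // f x = i} =
            Nat.card {x : Fin d // f x = ((colorRot ℓ k) ^ (t : ℕ)) i}} ∧
      C ⊓ Gf = ⊥ ∧
      (C : Set (Equiv.Perm (Fin d))) * (Gf : Set (Equiv.Perm (Fin d))) =
        (K : Set (Equiv.Perm (Fin d))) := by
  classical
  set θ := colorRot ℓ k with hθdef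
  have hℓ : 0 < ℓ := Nat.pos_of_ne_zero (NeZero.ne ℓ)
  -- basic facts about powers of the rotation θ
  have hA : ∀ (s : ℕ) (x : Fin ℓ), (θ ^ s) x = x + ((s * (ℓ / k) : ℕ) : Fin ℓ) := by
    intro s
    induction s with
    | zero => intro x; simp
    | succ n ih =>
      intro x
      rw [pow_succ', Equiv.Perm.mul_apply, ih x]
      show (x + ((n * (ℓ / k) : ℕ) : Fin ℓ)) + ((ℓ / k : ℕ) : Fin ℓ) = _
      rw [Nat.succ_mul, Nat.cast_add, add_assoc]
  have hC : ∀ s : ℕ, ℓ ∣ s * (ℓ / k) ↔ k ∣ s := by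
    intro s
    have hq : ℓ = k * (ℓ / k) := (Nat.mul_div_cancel' hdvd).symm
    have hqpos : 0 < ℓ / k := Nat.div_pos (Nat.le_of_dvd hℓ hdvd) hk
    nth_rewrite 1 [hq]
    exact Nat.mul_dvd_mul_iff_right hqpos
  have hpow1 : ∀ s : ℕ, θ ^ s = 1 ↔ k ∣ s := by
    intro s
    constructor
    · intro h
      have h0 : (θ ^ s) 0 = 0 := by rw [h]; rfl
      rw [hA s 0, zero_add] at h0
      exact (hC s).mp (Fin.natCast_eq_zero.mp h0)
    · intro h
      ext x
      rw [hA s x, Fin.natCast_eq_zero.mpr ((hC s).mpr h), add_zero]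
      rfl
  have hord : orderOf θ = k :=
    Nat.dvd_antisymm (orderOf_dvd_of_pow_eq_one ((hpow1 k).mpr dvd_rfl))
      ((hpow1 (orderOf θ)).mp (pow_orderOf_eq_one θ))
  refine ⟨hord, ?_⟩
  -- the type (fiber-size function) of f and its stabilizer
  set c : Fin ℓ → ℕ := fun i => Nat.card {x : Fin d // f x = i} with hcdef
  let e : ∀ i, {x : Fin d // f x = i} ≃ Fin (c i) := fun i =>
    Fintype.equivFinOfCardEq (Nat.card_eq_fintype_card (α := {x : Fin d // f x = i})).symm
  set P := typeStab c with hPdef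
  have hex : ∃ t, 0 < t ∧ θ ^ t ∈ P :=
    ⟨k, hk, by rw [(hpow1 k).mpr dvd_rfl]; exact P.one_mem⟩
  set t₀ := Nat.find hex with ht₀def
  obtain ⟨ht₀pos, ht₀mem⟩ := Nat.find_spec hex
  have ht₀ : ∀ t : ℕ, θ ^ t ∈ P ↔ t₀ ∣ t := by
    intro t
    constructor
    · intro h
      by_contra hndvd
      have hr : t % t₀ ≠ 0 := fun h0 => hndvd (Nat.dvd_of_mod_eq_zero h0)
      have hsplit : θ ^ t = (θ ^ t₀) ^ (t / t₀) * θ ^ (t % t₀) := by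
        rw [← pow_mul, ← pow_add, Nat.div_add_mod]
      have hmem : θ ^ (t % t₀) ∈ P := by
        have h2 := P.mul_mem (P.inv_mem (P.pow_mem ht₀mem (t / t₀))) h
        rwa [hsplit, inv_mul_cancel_left] at h2
      exact Nat.find_min hex (Nat.mod_lt t ht₀pos) ⟨Nat.pos_of_ne_zero hr, hmem⟩
    · rintro ⟨j, rfl⟩
      rw [pow_mul]
      exact P.pow_mem ht₀mem j
  have ht₀k : t₀ ∣ k := (ht₀ k).mp (by rw [(hpow1 k).mpr dvd_rfl]; exact P.one_mem)
  set m := k / t₀ with hmdef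
  have hmk : t₀ * m = k := Nat.mul_div_cancel' ht₀k
  have hmpos : 0 < m := Nat.div_pos (Nat.le_of_dvd hk ht₀k) ht₀pos
  have hdvdm : ∀ n : ℕ, k ∣ t₀ * n ↔ m ∣ n := by
    intro n
    rw [← hmk]
    exact Nat.mul_dvd_mul_iff_left ht₀pos
  set g : Equiv.Perm (Fin ℓ) := θ ^ t₀ with hgdef
  have hgn1 : ∀ n : ℕ, g ^ n = 1 ↔ m ∣ n := by
    intro n
    rw [hgdef, ← pow_mul, hpow1, hdvdm]
  have hgmem : ∀ i, c i = c (g i) := ht₀mem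
  have hginv : ∀ i, c i = c (g⁻¹ i) := P.inv_mem ht₀mem
  -- the model permutation R on the disjoint union of fibers
  have sigext : ∀ (p q : (i : Fin ℓ) × Fin (c i)),
      p.1 = q.1 → ((p.2 : ℕ) = (q.2 : ℕ)) → p = q := by
    rintro ⟨i, v⟩ ⟨j, w⟩ h1 h2
    dsimp at h1 h2
    subst h1
    exact congrArg (Sigma.mk i) (Fin.ext h2)
  let R : Equiv.Perm ((i : Fin ℓ) × Fin (c i)) :=
    { toFun := fun p => ⟨g⁻¹ p.1, Fin.cast (hginv p.1) p.2⟩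
      invFun := fun p => ⟨g p.1, Fin.cast (hgmem p.1) p.2⟩
      left_inv := fun p => sigext _ _ (Equiv.Perm.apply_inv_self g p.1) rfl
      right_inv := fun p => sigext _ _ (Equiv.Perm.inv_apply_self g p.1) rfl }
  have hR : ∀ (n : ℕ) (p : (i : Fin ℓ) × Fin (c i)),
      ((R ^ n) p).1 = (g⁻¹ ^ n) p.1 ∧ (((R ^ n) p).2 : ℕ) = (p.2 : ℕ) := by
    intro n
    induction n with
    | zero =>
      intro p
      constructor
      · rw [pow_zero, pow_zero]; rfl
      · rw [pow_zero]; rfl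
    | succ n ih =>
      intro p
      have h1 : (R ^ (n + 1)) p = (R ^ n) (R p) := by
        rw [pow_succ, Equiv.Perm.mul_apply]
      have h2 : (g⁻¹ ^ (n + 1)) p.1 = (g⁻¹ ^ n) (g⁻¹ p.1) := by
        rw [pow_succ, Equiv.Perm.mul_apply]
      have hRp1 : (R p).1 = g⁻¹ p.1 := rfl
      constructor
      · rw [h1, (ih (R p)).1, hRp1, h2]
      · rw [h1, (ih (R p)).2]; rfl
  let E : Fin d ≃ (i : Fin ℓ) × Fin (c i) :=
    (Equiv.sigmaFiberEquiv f).symm.trans (Equiv.sigmaCongrRight e)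
  have hE1 : ∀ x, (E x).1 = f x := fun x => rfl
  have hEsymm : ∀ p, f (E.symm p) = p.1 := by
    intro p
    have := hE1 (E.symm p)
    rw [E.apply_symm_apply] at this
    exact this.symm
  let σ₀ : Equiv.Perm (Fin d) := E.trans (R.trans E.symm)
  have hσ₀x : ∀ x, σ₀ x = E.symm (R (E x)) := fun _ => rfl
  have hσ₀pow : ∀ (n : ℕ) (x : Fin d), (σ₀ ^ n) x = E.symm ((R ^ n) (E x)) := by
    intro n
    induction n with
    | zero => intro x; simp
    | succ n ih =>
      intro x
      rw [pow_succ, Equiv.Perm.mul_apply, ih (σ₀ x), hσ₀x x, E.apply_symm_apply,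
        ← Equiv.Perm.mul_apply, ← pow_succ]
  have hfσ : ∀ (n : ℕ) (x : Fin d), f ((σ₀ ^ n) x) = (g⁻¹ ^ n) (f x) := by
    intro n x
    rw [hσ₀pow n x, hEsymm, (hR n (E x)).1, hE1]
  have hKmem : ∀ n : ℕ, ⇑(θ ^ (t₀ * n)) ∘ f ∘ ⇑(σ₀ ^ n) = f := by
    intro n
    funext x
    show (θ ^ (t₀ * n)) (f ((σ₀ ^ n) x)) = f x
    rw [hfσ n x, pow_mul, ← hgdef, inv_pow]
    exact Equiv.Perm.apply_inv_self _ _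
  have hσ₀m : σ₀ ^ m = 1 := by
    apply Equiv.ext
    intro x
    have hg1 : (g⁻¹) ^ m = 1 := by rw [inv_pow, (hgn1 m).mpr dvd_rfl, inv_one]
    have hfix : (R ^ m) (E x) = E x := by
      refine sigext _ _ ?_ (hR m (E x)).2
      rw [(hR m (E x)).1, hg1]
      rfl
    rw [hσ₀pow m x, hfix, E.symm_apply_apply]
    rfl
  have x₀ : Fin d := ⟨0, hd⟩
  have hGfdvd : ∀ n : ℕ, f ∘ ⇑(σ₀ ^ n) = f → m ∣ n := by
    intro n hn
    have h1 : (g⁻¹ ^ n) (f x₀) = f x₀ := by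
      rw [← hfσ n x₀]
      exact congrFun hn x₀
    have h2 : (g ^ n) (f x₀) = f x₀ := by
      conv_lhs => rw [← h1]
      rw [inv_pow]
      exact Equiv.Perm.apply_inv_self _ _
    have h3 : (θ ^ (t₀ * n)) (f x₀) = f x₀ := by rw [pow_mul, ← hgdef]; exact h2
    rw [hA] at h3
    have h4 : ((t₀ * n * (ℓ / k) : ℕ) : Fin ℓ) = 0 := by
      have := h3
      rwa [add_eq_left] at this
    exact (hdvdm n).mp ((hC _).mp (Fin.natCast_eq_zero.mp h4))
  have hσ₀ord : orderOf σ₀ = m := by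
    refine Nat.dvd_antisymm (orderOf_dvd_of_pow_eq_one hσ₀m) ?_
    apply hGfdvd
    rw [pow_orderOf_eq_one σ₀]
    simp
  -- the subgroups
  let Gf : Subgroup (Equiv.Perm (Fin d)) :=
    { carrier := {σ | f ∘ ⇑σ = f}
      one_mem' := by
        show f ∘ ⇑(1 : Equiv.Perm (Fin d)) = f
        simp
      mul_mem' := by
        intro p q hp hq
        show f ∘ ⇑(p * q) = f
        funext x
        show f (p (q x)) = f x
        have hp' := congrFun hp (q x)
        have hq' := congrFun hq x
        simp only [Function.comp_apply] at hp' hq'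
        rw [hp', hq']
      inv_mem' := by
        intro p hp
        show f ∘ ⇑p⁻¹ = f
        funext x
        have h := congrFun hp (p⁻¹ x)
        show f (p⁻¹ x) = f x
        rw [show f x = f (p (p⁻¹ x)) by rw [Equiv.Perm.apply_inv_self]]
        exact h.symm }
  have hGfmem : ∀ σ : Equiv.Perm (Fin d), σ ∈ Gf ↔ f ∘ ⇑σ = f := fun _ => Iff.rfl
  let K : Subgroup (Equiv.Perm (Fin d)) :=
    { carrier := {σ | ∃ t : ℕ, ⇑(θ ^ t) ∘ f ∘ ⇑σ = f}
      one_mem' := ⟨0, by simp⟩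
      mul_mem' := by
        rintro p q ⟨t, ht⟩ ⟨s, hs⟩
        refine ⟨t + s, ?_⟩
        funext x
        show (θ ^ (t + s)) (f (p (q x))) = f x
        have hp := congrFun ht (q x)
        have hq := congrFun hs x
        simp only [Function.comp_apply] at hp hq
        calc (θ ^ (t + s)) (f (p (q x)))
            = (θ ^ s) ((θ ^ t) (f (p (q x)))) := by
              rw [Nat.add_comm t s, pow_add]; rfl
          _ = (θ ^ s) (f (q x)) := by rw [hp]
          _ = f x := hq
      inv_mem' := by
        rintro p ⟨t, ht⟩
        refine ⟨t * (k - 1), ?_⟩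
        funext x
        show (θ ^ (t * (k - 1))) (f (p⁻¹ x)) = f x
        have hp := congrFun ht (p⁻¹ x)
        simp only [Function.comp_apply, Equiv.Perm.apply_inv_self] at hp
        have hexp : t * (k - 1) + t = t * k := by
          have : k - 1 + 1 = k := Nat.succ_pred_eq_of_pos hk
          calc t * (k - 1) + t = t * (k - 1 + 1) := by ring
            _ = t * k := by rw [this]
        calc (θ ^ (t * (k - 1))) (f (p⁻¹ x))
            = (θ ^ (t * (k - 1))) ((θ ^ t) (f x)) := by rw [hp]
          _ = (θ ^ (t * (k - 1) + t)) (f x) := by rw [pow_add]; rfl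
          _ = f x := by rw [hexp, (hpow1 (t * k)).mpr (dvd_mul_left k t)]; rfl }
  have hKmem' : ∀ σ : Equiv.Perm (Fin d),
      σ ∈ K ↔ ∃ t : ℕ, ⇑(θ ^ t) ∘ f ∘ ⇑σ = f := fun _ => Iff.rfl
  have hGfK : Gf ≤ K := by
    intro σ hσ
    refine ⟨0, ?_⟩
    rw [pow_zero]
    simpa using (hGfmem σ).mp hσ
  have hσ₀K : σ₀ ∈ K := by
    refine ⟨t₀, ?_⟩
    have h := hKmem 1
    simpa using h
  have hCK : Subgroup.zpowers σ₀ ≤ K := Subgroup.zpowers_le.mpr hσ₀K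
  -- cyclicity
  have hCcyc : IsCyclic (Subgroup.zpowers σ₀) := by
    constructor
    refine ⟨⟨σ₀, Subgroup.mem_zpowers σ₀⟩, ?_⟩
    rintro ⟨x, hx⟩
    obtain ⟨z, hz⟩ := Subgroup.mem_zpowers_iff.mp hx
    refine Subgroup.mem_zpowers_iff.mpr ⟨z, ?_⟩
    exact Subtype.ext (by simpa using hz)
  -- cardinality computation
  have hcardC : Nat.card (Subgroup.zpowers σ₀) = m := by
    rw [Nat.card_zpowers, hσ₀ord]
  have hSequiv : {t : Fin k // t₀ ∣ (t : ℕ)} ≃ Fin m :=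
    { toFun := fun t => ⟨(t : ℕ) / t₀, Nat.div_lt_div_of_lt_of_dvd ht₀k t.1.isLt⟩
      invFun := fun j => ⟨⟨(j : ℕ) * t₀, by
        calc (j : ℕ) * t₀ < m * t₀ := (Nat.mul_lt_mul_right ht₀pos).mpr j.isLt
          _ = k := by rw [Nat.mul_comm]; exact hmk⟩, dvd_mul_left t₀ (j : ℕ)⟩
      left_inv := fun t => Subtype.ext (Fin.ext (Nat.div_mul_cancel t.2))
      right_inv := fun j => Fin.ext (Nat.mul_div_cancel _ ht₀pos) }
  have hcardS :
      Nat.card {t : Fin k // ∀ i : Fin ℓ,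
        Nat.card {x : Fin d // f x = i} =
          Nat.card {x : Fin d // f x = (θ ^ (t : ℕ)) i}} = m := by
    have h1 : Nat.card {t : Fin k // ∀ i : Fin ℓ,
        Nat.card {x : Fin d // f x = i} =
          Nat.card {x : Fin d // f x = (θ ^ (t : ℕ)) i}}
        = Nat.card {t : Fin k // t₀ ∣ (t : ℕ)} :=
      Nat.card_congr (Equiv.subtypeEquivRight (fun t => ht₀ (t : ℕ)))
    rw [h1, Nat.card_congr hSequiv, Nat.card_eq_fintype_card, Fintype.card_fin]
  -- trivial intersection
  have hinf : Subgroup.zpowers σ₀ ⊓ Gf = ⊥ := by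
    rw [eq_bot_iff]
    intro x hx
    obtain ⟨hxC, hxG⟩ := Subgroup.mem_inf.mp hx
    obtain ⟨n, rfl⟩ := Submonoid.mem_powers_iff _ _ |>.mp (mem_powers_iff_mem_zpowers.mpr hxC)
    obtain ⟨j, rfl⟩ := hGfdvd n ((hGfmem _).mp hxG)
    rw [Subgroup.mem_bot, pow_mul, hσ₀m, one_pow]
  -- product decomposition
  have hprod : (Subgroup.zpowers σ₀ : Set (Equiv.Perm (Fin d))) * (Gf : Set (Equiv.Perm (Fin d)))
      = (K : Set (Equiv.Perm (Fin d))) := by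
    apply Set.ext
    intro σ
    constructor
    · intro hσ
      obtain ⟨a, ha, b, hb, rfl⟩ := Set.mem_mul.mp hσ
      exact K.mul_mem (hCK ha) (hGfK hb)
    · intro hσ
      obtain ⟨t, ht⟩ := (hKmem' σ).mp hσ
      have hPt : θ ^ t ∈ P := by
        have hinvmem : (θ ^ t)⁻¹ ∈ P := by
          intro i
          apply Nat.card_congr
          refine (Equiv.subtypeEquivRight ?_).trans (Equiv.subtypeEquiv σ (fun z => Iff.rfl))
          intro z
          constructor
          · intro h
            have h2 := congrFun ht z
            show f (σ z) = (θ ^ t)⁻¹ i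
            rw [← h, ← h2]
            exact (Equiv.Perm.inv_apply_self _ _).symm
          · intro h
            have h2 := congrFun ht z
            rw [← h2]
            show (θ ^ t) (f (σ z)) = i
            rw [h]
            exact Equiv.Perm.apply_inv_self _ _
        have := P.inv_mem hinvmem
        rwa [inv_inv] at this
      obtain ⟨j, hj⟩ := (ht₀ t).mp hPt
      refine Set.mem_mul.mpr ⟨σ₀ ^ j, ?_, (σ₀ ^ j)⁻¹ * σ, ?_, ?_⟩
      · exact (Subgroup.zpowers σ₀).pow_mem (Subgroup.mem_zpowers σ₀) j
      · show f ∘ ⇑((σ₀ ^ j)⁻¹ * σ) = f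
        funext y
        show f ((σ₀ ^ j)⁻¹ (σ y)) = f y
        have h5 : ∀ z, f ((σ₀ ^ j)⁻¹ z) = (g ^ j) (f z) := by
          intro z
          have h6 := hfσ j ((σ₀ ^ j)⁻¹ z)
          rw [Equiv.Perm.apply_inv_self, inv_pow] at h6
          apply_fun ⇑(g ^ j) at h6
          rw [Equiv.Perm.apply_inv_self] at h6
          exact h6.symm
        rw [h5 (σ y), hgdef, ← pow_mul, ← hj]
        exact congrFun ht y
      · exact mul_inv_cancel_left _ _
  have hnorm : ∀ x ∈ K, ∀ g' ∈ Gf, x * g' * x⁻¹ ∈ Gf := by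
    rintro x ⟨t, hx⟩ g' hg'
    show f ∘ ⇑(x * g' * x⁻¹) = f
    funext y
    show f (x (g' (x⁻¹ y))) = f y
    have h1 : ∀ z, f (x z) = (θ ^ t)⁻¹ (f z) := by
      intro z
      apply (θ ^ t).injective
      have hz := congrFun hx z
      simp only [Function.comp_apply] at hz
      rw [hz, Equiv.Perm.apply_inv_self]
    have hg'' : ∀ z, f (g' z) = f z := by
      intro z
      have := congrFun hg' z
      simpa using this
    calc f (x (g' (x⁻¹ y))) = (θ ^ t)⁻¹ (f (g' (x⁻¹ y))) := h1 _
      _ = (θ ^ t)⁻¹ (f (x⁻¹ y)) := by rw [hg'' (x⁻¹ y)]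
      _ = f (x (x⁻¹ y)) := (h1 _).symm
      _ = f y := by rw [Equiv.Perm.apply_inv_self]
  exact ⟨K, Gf, Subgroup.zpowers σ₀, rfl, rfl, hGfK,
    hnorm, hCcyc, hCK, hcardC.trans hcardS.symm, hinf, hprod⟩
end
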